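/- arXiv:2001.02798 — 10 statements merged into one kernel-verified Lean document; each statement's English description precedes it below -/
import Mathlib

section
/- Suppose V : S → ℝ is bounded and measurable and satisfies the ALP (Bellman) constraints, i.e. V(s) − γ ∫_S V(s') P(ds'|s,a) ≤ c(s,a) for every s ∈ S and every a ∈ A_s. Then V(s) ≤ V*(s) for every s ∈ S. -/
open MeasureTheory ProbabilityTheory

/-- If `V : S → ℝ` is bounded measurable and satisfies the ALP (Bellman)
constraints `V s − γ ∫ V dP(·|s,a) ≤ c (s,a)` for all states `s` and admissible actions
`a ∈ Act s`, then `V ≤ V*` pointwise, where `V*` is a bounded measurable solution of the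
Bellman equation. -/
theorem stmt_0
    {S A : Type*} [MeasurableSpace S] [MeasurableSpace A]
    (Act : S → Set A) (hAct : ∀ s, (Act s).Nonempty)
    (c : S × A → ℝ) (hc_meas : Measurable c) (hc_bdd : ∃ M, ∀ p, |c p| ≤ M)
    (γ : ℝ) (hγ0 : 0 ≤ γ) (hγ1 : γ < 1)
    (P : Kernel (S × A) S) [IsMarkovKernel P]
    (Vstar : S → ℝ) (hVstar_meas : Measurable Vstar)
    (hVstar_bdd : ∃ M, ∀ s, |Vstar s| ≤ M)
    (hBellman : ∀ s : S,
      Vstar s = ⨅ a : Act s, (c (s, (a : A)) + γ * ∫ s', Vstar s' ∂(P (s, (a : A)))))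
    (V : S → ℝ) (hV_meas : Measurable V) (hV_bdd : ∃ M, ∀ s, |V s| ≤ M)
    (hALP : ∀ s : S, ∀ a ∈ Act s, V s - γ * ∫ s', V s' ∂(P (s, a)) ≤ c (s, a)) :
    ∀ s : S, V s ≤ Vstar s := by
  obtain ⟨Ms, hMs⟩ := hVstar_bdd
  obtain ⟨Mv, hMv⟩ := hV_bdd
  intro s₀
  have hS : Nonempty S := ⟨s₀⟩
  set W : S → ℝ := fun s => V s - Vstar s with hW
  have hbdd : BddAbove (Set.range W) := by
    refine ⟨Mv + Ms, ?_⟩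
    rintro _ ⟨s, rfl⟩
    have h1 := abs_le.mp (hMv s)
    have h2 := abs_le.mp (hMs s)
    simp only [hW]
    linarith [h1.2, h2.1]
  set D := sSup (Set.range W) with hD
  have hint : ∀ (μ : Measure S) [IsProbabilityMeasure μ] (f : S → ℝ),
      Measurable f → ∀ M : ℝ, (∀ s, |f s| ≤ M) → Integrable f μ := by
    intro μ _ f hf M hfM
    exact (integrable_const M).mono' hf.aestronglyMeasurable
      (ae_of_all _ fun s => by simpa [Real.norm_eq_abs] using hfM s)
  have key : ∀ s, W s ≤ γ * D := by
    intro s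
    refine le_of_forall_pos_le_add ?_
    intro ε hε
    haveI : Nonempty (Act s) := (hAct s).to_subtype
    have hlt : (⨅ a : Act s, (c (s, (a : A))
        + γ * ∫ s', Vstar s' ∂(P (s, (a : A))))) < Vstar s + ε := by
      rw [← hBellman s]; linarith
    obtain ⟨a, ha⟩ := exists_lt_of_ciInf_lt hlt
    have hV_le : V s ≤ c (s, (a : A)) + γ * ∫ s', V s' ∂(P (s, (a : A))) := by
      have := hALP s a a.2
      linarith
    have hVint : Integrable V (P (s, (a : A))) := hint _ V hV_meas Mv hMv
    have hVsint : Integrable Vstar (P (s, (a : A))) := hint _ Vstar hVstar_meas Ms hMs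
    have hWint : Integrable W (P (s, (a : A))) := hVint.sub hVsint
    have hWle : ∀ s', W s' ≤ D := fun s' => le_csSup hbdd ⟨s', rfl⟩
    have hintW : ∫ s', W s' ∂(P (s, (a : A))) ≤ D := by
      calc ∫ s', W s' ∂(P (s, (a : A))) ≤ ∫ _, D ∂(P (s, (a : A))) :=
            integral_mono hWint (integrable_const D) hWle
        _ = D := by simp
    have hsub : ∫ s', W s' ∂(P (s, (a : A)))
        = (∫ s', V s' ∂(P (s, (a : A)))) - ∫ s', Vstar s' ∂(P (s, (a : A))) :=
      integral_sub hVint hVsint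
    have hγW : γ * ((∫ s', V s' ∂(P (s, (a : A)))) - ∫ s', Vstar s' ∂(P (s, (a : A)))) ≤ γ * D := by
      apply mul_le_mul_of_nonneg_left _ hγ0
      rw [← hsub]; exact hintW
    simp only [hW]
    nlinarith [ha, hV_le]
  have hDle : D ≤ γ * D := csSup_le (Set.range_nonempty W) (by rintro _ ⟨s, rfl⟩; exact key s)
  have hD0 : D ≤ 0 := by nlinarith
  have := le_trans (le_csSup hbdd ⟨s₀, rfl⟩) hD0
  simp only [hW] at this
  linarith
end

section
/- Let ε > 0. Suppose W : S → ℝ is bounded measurable and satisfies the ALP (Bellman) constraints, and V̄ : S → ℝ is bounded measurable with sup_{s∈S} |W(s) − V̄(s)| ≤ ε. Then the shifted function V̄ − Γε also satisfies the ALP (Bellman) constraints, and sup_{s∈S} |W(s) − (V̄(s) − Γε)| ≤ 2ε/(1−γ). -/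
open MeasureTheory ProbabilityTheory

/-- If `W` is bounded measurable and satisfies the ALP (Bellman) constraints,
and `V̄` is bounded measurable with `sup_s |W s − V̄ s| ≤ ε`, then the shifted function
`V̄ − Γ ε` (with `Γ = (1+γ)/(1−γ)`) also satisfies the ALP constraints and
`sup_s |W s − (V̄ s − Γ ε)| ≤ 2ε/(1−γ)`. -/
theorem stmt_1
    {S A : Type*} [MeasurableSpace S] [MeasurableSpace A]
    (Act : S → Set A) (hAct : ∀ s, (Act s).Nonempty)
    (c : S × A → ℝ) (hc_meas : Measurable c) (hc_bdd : ∃ M, ∀ p, |c p| ≤ M)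
    (γ : ℝ) (hγ0 : 0 ≤ γ) (hγ1 : γ < 1)
    (P : Kernel (S × A) S) [IsMarkovKernel P]
    (Γ : ℝ) (hΓ : Γ = (1 + γ) / (1 - γ))
    (ε : ℝ) (hε : 0 < ε)
    (W : S → ℝ) (hW_meas : Measurable W) (hW_bdd : ∃ M, ∀ s, |W s| ≤ M)
    (hW_ALP : ∀ s : S, ∀ a ∈ Act s, W s - γ * ∫ s', W s' ∂(P (s, a)) ≤ c (s, a))
    (Vbar : S → ℝ) (hVbar_meas : Measurable Vbar) (hVbar_bdd : ∃ M, ∀ s, |Vbar s| ≤ M)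
    (hclose : ∀ s : S, |W s - Vbar s| ≤ ε) :
    (∀ s : S, ∀ a ∈ Act s,
        (Vbar s - Γ * ε) - γ * ∫ s', (Vbar s' - Γ * ε) ∂(P (s, a)) ≤ c (s, a)) ∧
      (∀ s : S, |W s - (Vbar s - Γ * ε)| ≤ 2 * ε / (1 - γ)) := by
  have h1γ : (0:ℝ) < 1 - γ := by linarith
  obtain ⟨MW, hMW⟩ := hW_bdd
  obtain ⟨MV, hMV⟩ := hVbar_bdd
  have hWint : ∀ p : S × A, Integrable W (P p) := fun p =>
    (integrable_const MW).mono' hW_meas.aestronglyMeasurable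
      (Filter.Eventually.of_forall fun s => by simpa using hMW s)
  have hVint : ∀ p : S × A, Integrable Vbar (P p) := fun p =>
    (integrable_const MV).mono' hVbar_meas.aestronglyMeasurable
      (Filter.Eventually.of_forall fun s => by simpa using hMV s)
  constructor
  · intro s a ha
    have hint : ∫ s', (Vbar s' - Γ * ε) ∂(P (s, a))
        = (∫ s', Vbar s' ∂(P (s, a))) - Γ * ε := by
      rw [integral_sub (hVint (s, a)) (integrable_const _), integral_const]
      simp
    rw [hint]
    have h2 : ∫ s', Vbar s' ∂(P (s, a)) ≥ (∫ s', W s' ∂(P (s, a))) - ε := by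
      have : (∫ s', W s' ∂(P (s, a))) - ∫ s', Vbar s' ∂(P (s, a))
          = ∫ s', (W s' - Vbar s') ∂(P (s, a)) := (integral_sub (hWint _) (hVint _)).symm
      have hb : |∫ s', (W s' - Vbar s') ∂(P (s, a))| ≤ ε := by
        calc |∫ s', (W s' - Vbar s') ∂(P (s, a))|
            ≤ ∫ s', |W s' - Vbar s'| ∂(P (s, a)) := (by simpa [Real.norm_eq_abs] using norm_integral_le_integral_norm (fun s' => W s' - Vbar s'))
          _ ≤ ∫ _s', ε ∂(P (s, a)) := by
              apply integral_mono ((hWint _).sub (hVint _)).abs (integrable_const _)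
              intro s'; exact hclose s'
          _ = ε := by simp
      have := abs_le.mp hb
      linarith [this.2, this.1]
    have h3 : Vbar s ≤ W s + ε := by
      have := abs_le.mp (hclose s)
      linarith [this.1]
    have hALP := hW_ALP s a ha
    have hΓeq : (1 - γ) * (Γ * ε) = (1 + γ) * ε := by
      rw [hΓ]; field_simp
    nlinarith [mul_le_mul_of_nonneg_left h2 hγ0]
  · intro s
    have h := abs_le.mp (hclose s)
    have hΓpos : 0 ≤ Γ * ε := by
      rw [hΓ]; positivity
    rw [abs_le]
    constructor
    · have hkey : ε ≤ 2 * ε / (1 - γ) := by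
        rw [le_div_iff₀ h1γ]; nlinarith
      linarith [h.1, hΓpos]
    · have : W s - (Vbar s - Γ * ε) ≤ ε + Γ * ε := by linarith [h.2]
      calc W s - (Vbar s - Γ * ε) ≤ ε + Γ * ε := this
        _ = 2 * ε / (1 - γ) := by rw [hΓ]; field_simp; ring
end

section
/- Let ν be a probability measure on S and ε > 0. Suppose (b₀^FE, b^FE) is an optimal FELP solution, i.e. its value function V^FE := V(b₀^FE, b^FE) satisfies the ALP (Bellman) constraints and ∫_S V^FE dν ≥ ∫_S V(b₀,b) dν for every FELP-feasible pair (b₀,b). Suppose further there exist C < ∞ and a pair (b̄₀, b̄) with ‖b̄‖_{∞,ρ} ≤ C such that sup_{s∈S} |V*(s) − V(b̄₀,b̄)(s)| ≤ ε. Then ∫_S |V*(s) − V^FE(s)| ν(ds) ≤ 2ε/(1−γ). -/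
/-!
An ALP-feasible `V` lies below `V*`: the Bellman equation gives
`V s - V* s ≤ γ · sup (V - V*)`, and `γ < 1` forces `sup (V - V*) ≤ 0`.
Conversely, if `W` is uniformly `ε`-close to `V*`, the shift `W - ε(1+γ)/(1-γ)` is
ALP-feasible, and lowering the intercept keeps it a FELP candidate. Optimality of `V^FE` then
gives `∫ V^FE dν ≥ ∫ W dν - ε(1+γ)/(1-γ) ≥ ∫ V* dν - 2ε/(1-γ)`, and since `V^FE ≤ V*` this
bounds `∫ |V* - V^FE| dν`.
-/

open MeasureTheory ProbabilityTheory

/-- The random basis function `φ(s;θ) = φ̄(⟨(1,s), θ⟩)`. -/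
noncomputable def phi (d : ℕ) (phibar : ℝ → ℝ)
    (θ : EuclideanSpace ℝ (Fin (d + 1))) (s : EuclideanSpace ℝ (Fin d)) : ℝ :=
  phibar (θ 0 + ∑ i : Fin d, s i * θ i.succ)

theorem le_zero_of_le_mul_iSup {ι : Type*} {f : ι → ℝ} {γ : ℝ} (hγ : γ < 1)
    (hf : BddAbove (Set.range f)) (h : ∀ i, f i ≤ γ * ⨆ j, f j) (i : ι) : f i ≤ 0 := by
  have : Nonempty ι := ⟨i⟩
  have hsup : ⨆ j, f j ≤ γ * ⨆ j, f j := ciSup_le h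
  have hsup_nonpos : ⨆ j, f j ≤ 0 := by nlinarith
  exact (le_ciSup hf i).trans hsup_nonpos

section ProbabilityIntegrals

variable {X : Type*} [MeasurableSpace X] {μ : Measure X}

theorem integrable_of_abs_le [IsFiniteMeasure μ] {f : X → ℝ} (hf : Measurable f) {M : ℝ}
    (h : ∀ x, |f x| ≤ M) : Integrable f μ :=
  .of_bound hf.aestronglyMeasurable M (ae_of_all _ h)

variable [IsProbabilityMeasure μ]

theorem integral_le_of_forall_le {f : X → ℝ} (hf : Integrable f μ) {K : ℝ}
    (h : ∀ x, f x ≤ K) : ∫ x, f x ∂μ ≤ K := by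
  simpa using integral_mono hf (integrable_const K) h

theorem abs_integral_le_of_forall_abs_le {f : X → ℝ} {M : ℝ} (h : ∀ x, |f x| ≤ M) :
    |∫ x, f x ∂μ| ≤ M := by
  simpa using norm_integral_le_of_norm_le_const (μ := μ) (f := f) (ae_of_all _ h)

theorem integral_sub_const {f : X → ℝ} (hf : Integrable f μ) (k : ℝ) :
    ∫ x, (f x - k) ∂μ = ∫ x, f x ∂μ - k := by
  simp [integral_sub hf (integrable_const k)]

end ProbabilityIntegrals

section ALP

variable {S A : Type*} [MeasurableSpace S] [MeasurableSpace A]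

-- Only meaningful when every `Act s` is nonempty: `⨅` over an empty index type of reals is `0`.
def IsBellmanSolution (Act : S → Set A) (c : S × A → ℝ) (γ : ℝ) (P : Kernel (S × A) S)
    (V : S → ℝ) : Prop :=
  ∀ s, V s = ⨅ a : Act s, (c (s, (a : A)) + γ * ∫ s', V s' ∂(P (s, (a : A))))

def IsALPFeasible (Act : S → Set A) (c : S × A → ℝ) (γ : ℝ) (P : Kernel (S × A) S)
    (V : S → ℝ) : Prop :=
  ∀ s, ∀ a ∈ Act s, V s - γ * ∫ s', V s' ∂(P (s, a)) ≤ c (s, a)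

variable {Act : S → Set A} {c : S × A → ℝ} {γ : ℝ} {P : Kernel (S × A) S}
  [IsMarkovKernel P] {V Vstar W : S → ℝ} {ε : ℝ}

theorem IsBellmanSolution.isALPFeasible (hVstar : IsBellmanSolution Act c γ P Vstar)
    (hc : ∃ M, ∀ p, |c p| ≤ M) (hγ0 : 0 ≤ γ) (hVstar_bdd : ∃ M, ∀ s, |Vstar s| ≤ M) :
    IsALPFeasible Act c γ P Vstar := by
  obtain ⟨Mc, hMc⟩ := hc
  obtain ⟨M, hM⟩ := hVstar_bdd
  intro s a ha
  have hbdd : BddBelow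
      (Set.range fun a : Act s => c (s, (a : A)) + γ * ∫ s', Vstar s' ∂(P (s, a))) := by
    refine ⟨-Mc - γ * M, ?_⟩
    rintro _ ⟨a', rfl⟩
    have hc_ge := (abs_le.mp (hMc (s, a'))).1
    have hint_ge := (abs_le.mp (abs_integral_le_of_forall_abs_le (μ := P (s, a')) hM)).1
    have := mul_le_mul_of_nonneg_left hint_ge hγ0
    dsimp only
    linarith
  rw [sub_le_iff_le_add, hVstar s]
  exact ciInf_le hbdd ⟨a, ha⟩

theorem IsALPFeasible.sub_le_mul_iSup (hV : IsALPFeasible Act c γ P V)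
    (hVstar : IsBellmanSolution Act c γ P Vstar) (hAct : ∀ s, (Act s).Nonempty) (hγ0 : 0 ≤ γ)
    (hV_int : ∀ p, Integrable V (P p)) (hVstar_int : ∀ p, Integrable Vstar (P p))
    (hbdd : BddAbove (Set.range fun s => V s - Vstar s)) (s : S) :
    V s - Vstar s ≤ γ * ⨆ s', (V s' - Vstar s') := by
  have : Nonempty (Act s) := (hAct s).to_subtype
  refine le_of_forall_pos_le_add fun η hη => ?_
  obtain ⟨a, ha⟩ : ∃ a : Act s,
      c (s, (a : A)) + γ * ∫ s', Vstar s' ∂(P (s, (a : A))) < Vstar s + η :=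
    exists_lt_of_ciInf_lt (by rw [← hVstar s]; linarith)
  have hint : ∫ s', V s' ∂(P (s, (a : A))) - ∫ s', Vstar s' ∂(P (s, (a : A)))
      ≤ ⨆ s', (V s' - Vstar s') := by
    rw [← integral_sub (hV_int _) (hVstar_int _)]
    exact integral_le_of_forall_le ((hV_int _).sub (hVstar_int _)) (le_ciSup hbdd)
  have := mul_le_mul_of_nonneg_left hint hγ0
  linarith [hV s a a.2]

theorem IsALPFeasible.le_of_isBellmanSolution (hV : IsALPFeasible Act c γ P V)
    (hVstar : IsBellmanSolution Act c γ P Vstar) (hAct : ∀ s, (Act s).Nonempty) (hγ0 : 0 ≤ γ)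
    (hγ1 : γ < 1) (hV_int : ∀ p, Integrable V (P p))
    (hVstar_int : ∀ p, Integrable Vstar (P p))
    (hbdd : BddAbove (Set.range fun s => V s - Vstar s)) (s : S) : V s ≤ Vstar s :=
  sub_nonpos.mp <| le_zero_of_le_mul_iSup hγ1 hbdd
    (hV.sub_le_mul_iSup hVstar hAct hγ0 hV_int hVstar_int hbdd) s

-- The shift `δ = ε(1+γ)/(1-γ)` solves `(1-γ)δ = ε + γε`, the error made by replacing `V` with `W`
-- in `V s - γ ∫ V`.
theorem IsALPFeasible.sub_const_of_abs_sub_le (hV : IsALPFeasible Act c γ P V) (hγ0 : 0 ≤ γ)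
    (hγ1 : γ < 1) (hV_int : ∀ p, Integrable V (P p)) (hW_int : ∀ p, Integrable W (P p))
    (hVW : ∀ s, |V s - W s| ≤ ε) :
    IsALPFeasible Act c γ P fun s => W s - ε * (1 + γ) / (1 - γ) := by
  intro s a ha
  have hW_ge : ∫ s', V s' ∂(P (s, a)) - ε ≤ ∫ s', W s' ∂(P (s, a)) := by
    have := integral_le_of_forall_le ((hV_int (s, a)).sub (hW_int (s, a)))
      fun s' => (abs_le.mp (hVW s')).2
    rw [integral_sub' (hV_int _) (hW_int _)] at this
    linarith
  have hδ : ε * (1 + γ) / (1 - γ) * (1 - γ) = ε * (1 + γ) := by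
    field_simp [(sub_pos.mpr hγ1).ne']
  rw [integral_sub_const (hW_int _)]
  have := mul_le_mul_of_nonneg_left hW_ge hγ0
  linarith [hV s a ha, (abs_le.mp (hVW s)).1]

theorem IsBellmanSolution.integral_abs_sub_le_of_optimal {ν : Measure S}
    [IsProbabilityMeasure ν] (hVstar : IsBellmanSolution Act c γ P Vstar)
    (hAct : ∀ s, (Act s).Nonempty)
    (hc : ∃ M, ∀ p, |c p| ≤ M) (hγ0 : 0 ≤ γ) (hγ1 : γ < 1) (hVstar_meas : Measurable Vstar)
    (hVstar_bdd : ∃ M, ∀ s, |Vstar s| ≤ M) (hV_meas : Measurable V)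
    (hV_bdd : ∃ M, ∀ s, |V s| ≤ M) (hV : IsALPFeasible Act c γ P V) (hW_meas : Measurable W)
    (hVstarW : ∀ s, |Vstar s - W s| ≤ ε)
    (hV_opt : ∀ k : ℝ, IsALPFeasible Act c γ P (fun s => W s - k) →
      ∫ s, (W s - k) ∂ν ≤ ∫ s, V s ∂ν) :
    ∫ s, |Vstar s - V s| ∂ν ≤ 2 * ε / (1 - γ) := by
  obtain ⟨M, hM⟩ := hVstar_bdd
  obtain ⟨MV, hMV⟩ := hV_bdd
  have hW_bdd : ∀ s, |W s| ≤ M + ε := fun s => by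
    have := abs_sub_abs_le_abs_sub (W s) (Vstar s)
    linarith [abs_sub_comm (Vstar s) (W s), hM s, hVstarW s]
  have hVstar_int (μ : Measure S) [IsFiniteMeasure μ] : Integrable Vstar μ :=
    integrable_of_abs_le hVstar_meas hM
  have hV_int (μ : Measure S) [IsFiniteMeasure μ] : Integrable V μ :=
    integrable_of_abs_le hV_meas hMV
  have hW_int (μ : Measure S) [IsFiniteMeasure μ] : Integrable W μ :=
    integrable_of_abs_le hW_meas hW_bdd
  have hV_le : ∀ s, V s ≤ Vstar s := by
    refine hV.le_of_isBellmanSolution hVstar hAct hγ0 hγ1 (fun _ => hV_int _)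
      (fun _ => hVstar_int _) ⟨MV + M, ?_⟩
    rintro _ ⟨s, rfl⟩
    linarith [(abs_le.mp (hMV s)).2, (abs_le.mp (hM s)).1]
  set δ := ε * (1 + γ) / (1 - γ)
  have hW_opt : ∫ s, W s ∂ν - δ ≤ ∫ s, V s ∂ν := by
    rw [← integral_sub_const (hW_int ν)]
    refine hV_opt δ ((hVstar.isALPFeasible hc hγ0 ⟨M, hM⟩).sub_const_of_abs_sub_le hγ0 hγ1
      (fun _ => hVstar_int _) (fun _ => hW_int _) hVstarW)
  have hVstarW_int : ∫ s, (Vstar s - W s) ∂ν ≤ ε :=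
    integral_le_of_forall_le ((hVstar_int ν).sub (hW_int ν)) fun s => (abs_le.mp (hVstarW s)).2
  calc ∫ s, |Vstar s - V s| ∂ν = ∫ s, (Vstar s - V s) ∂ν :=
        integral_congr_ae (ae_of_all _ fun s => abs_of_nonneg (sub_nonneg.mpr (hV_le s)))
    _ = ∫ s, (Vstar s - W s) ∂ν + (∫ s, W s ∂ν - ∫ s, V s ∂ν) := by
        rw [integral_sub (hVstar_int ν) (hV_int ν), integral_sub (hVstar_int ν) (hW_int ν)]
        ring
    _ ≤ ε + δ := by linarith
    _ = 2 * ε / (1 - γ) := by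
        simp only [δ]
        field_simp [(sub_pos.mpr hγ1).ne']
        ring

end ALP

section Density

variable {X : Type*} [MeasurableSpace X] {μ : Measure X} {ρ : X → ℝ}

theorem lintegral_ofReal_eq_one_of_isProbabilityMeasure_withDensity
    (h : IsProbabilityMeasure (μ.withDensity fun x => ENNReal.ofReal (ρ x))) :
    ∫⁻ x, ENNReal.ofReal (ρ x) ∂μ = 1 := by
  simpa [withDensity_apply _ MeasurableSet.univ] using h.measure_univ

theorem integrable_of_isProbabilityMeasure_withDensity (hρ_meas : Measurable ρ)
    (hρ_nonneg : ∀ x, 0 ≤ ρ x)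
    (h : IsProbabilityMeasure (μ.withDensity fun x => ENNReal.ofReal (ρ x))) :
    Integrable ρ μ := by
  refine ⟨hρ_meas.aestronglyMeasurable, ?_⟩
  rw [hasFiniteIntegral_iff_ofReal (ae_of_all _ hρ_nonneg),
    lintegral_ofReal_eq_one_of_isProbabilityMeasure_withDensity h]
  exact ENNReal.one_lt_top

theorem integral_eq_one_of_isProbabilityMeasure_withDensity (hρ_meas : Measurable ρ)
    (hρ_nonneg : ∀ x, 0 ≤ ρ x)
    (h : IsProbabilityMeasure (μ.withDensity fun x => ENNReal.ofReal (ρ x))) :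
    ∫ x, ρ x ∂μ = 1 := by
  rw [integral_eq_lintegral_of_nonneg_ae (ae_of_all _ hρ_nonneg) hρ_meas.aestronglyMeasurable,
    lintegral_ofReal_eq_one_of_isProbabilityMeasure_withDensity h, ENNReal.toReal_one]

theorem abs_integral_mul_le_of_abs_le_mul {b g : X → ℝ} {C : ℝ} (hρ : Integrable ρ μ)
    (hb : ∀ x, |b x| ≤ C * ρ x) (hg : ∀ x, |g x| ≤ 1) :
    |∫ x, b x * g x ∂μ| ≤ C * ∫ x, ρ x ∂μ := by
  rw [← integral_const_mul, ← Real.norm_eq_abs]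
  refine norm_integral_le_of_norm_le (hρ.const_mul C) (ae_of_all _ fun x => ?_)
  rw [Real.norm_eq_abs, abs_mul]
  exact (mul_le_of_le_one_right (abs_nonneg _) (hg x)).trans (hb x)

end Density

section RandomFeatures

variable {d : ℕ} {phibar : ℝ → ℝ}

theorem continuous_phi (h : Continuous phibar) :
    Continuous (Function.uncurry (phi d phibar)) := by
  unfold phi Function.uncurry
  fun_prop

theorem measurable_integral_mul_phi (h : Continuous phibar)
    {b : EuclideanSpace ℝ (Fin (d + 1)) → ℝ} (hb : Measurable b) :
    Measurable fun s => ∫ θ, b θ * phi d phibar θ s := by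
  have hmeas : Measurable fun p : EuclideanSpace ℝ (Fin d) × EuclideanSpace ℝ (Fin (d + 1)) =>
      b p.2 * phi d phibar p.2 p.1 :=
    (hb.comp measurable_snd).mul ((continuous_phi h).measurable.comp measurable_swap)
  exact hmeas.stronglyMeasurable.integral_prod_right'.measurable

end RandomFeatures

theorem stmt_2_general
    {d : ℕ} (Sset : Set (EuclideanSpace ℝ (Fin d)))
    {A : Type*} [MeasurableSpace A]
    (Act : ↥Sset → Set A) (hAct : ∀ s, (Act s).Nonempty)
    (c : ↥Sset × A → ℝ) (hc_bdd : ∃ M, ∀ p, |c p| ≤ M)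
    (γ : ℝ) (hγ0 : 0 ≤ γ) (hγ1 : γ < 1)
    (P : Kernel (↥Sset × A) ↥Sset) [IsMarkovKernel P]
    (Vstar : ↥Sset → ℝ) (hVstar_meas : Measurable Vstar)
    (hVstar_bdd : ∃ M, ∀ s, |Vstar s| ≤ M)
    (hBellman : ∀ s : ↥Sset,
      Vstar s = ⨅ a : Act s, (c (s, (a : A)) + γ * ∫ s', Vstar s' ∂(P (s, (a : A)))))
    (L : NNReal) (phibar : ℝ → ℝ) (hLip : LipschitzWith L phibar)
    (hphibar_bdd : ∀ x, |phibar x| ≤ 1)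
    (ρ : EuclideanSpace ℝ (Fin (d + 1)) → ℝ) (hρ_meas : Measurable ρ)
    (hρ_pos : ∀ θ, 0 < ρ θ)
    (hρ_prob : IsProbabilityMeasure (volume.withDensity fun θ => ENNReal.ofReal (ρ θ)))
    (ν : Measure ↥Sset) [IsProbabilityMeasure ν]
    (ε : ℝ)
    -- the optimal FELP solution (b₀FE, bFE) with value function VFE
    (b₀FE : ℝ) (bFE : EuclideanSpace ℝ (Fin (d + 1)) → ℝ) (hbFE_meas : Measurable bFE)
    (hbFE_fin : ∃ C : ℝ, ∀ θ, |bFE θ| ≤ C * ρ θ)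
    (VFE : ↥Sset → ℝ)
    (hVFE : ∀ s : ↥Sset, VFE s = b₀FE + ∫ θ, bFE θ * phi d phibar θ (s : EuclideanSpace ℝ (Fin d)))
    (hVFE_ALP : ∀ s : ↥Sset, ∀ a ∈ Act s,
      VFE s - γ * ∫ s', VFE s' ∂(P (s, a)) ≤ c (s, a))
    (hVFE_opt : ∀ (b₀ : ℝ) (b : EuclideanSpace ℝ (Fin (d + 1)) → ℝ), Measurable b →
      (∃ C : ℝ, ∀ θ, |b θ| ≤ C * ρ θ) →
      (∀ s : ↥Sset, ∀ a ∈ Act s,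
        (b₀ + ∫ θ, b θ * phi d phibar θ (s : EuclideanSpace ℝ (Fin d)))
          - γ * ∫ s', (b₀ + ∫ θ, b θ * phi d phibar θ (s' : EuclideanSpace ℝ (Fin d)))
              ∂(P (s, a)) ≤ c (s, a)) →
      ∫ s, (b₀ + ∫ θ, b θ * phi d phibar θ (s : EuclideanSpace ℝ (Fin d))) ∂ν
        ≤ ∫ s, VFE s ∂ν)
    -- a uniformly ε-accurate function in R_C(φ, ρ)
    (hRC : ∃ (C : ℝ) (bbar₀ : ℝ) (bbar : EuclideanSpace ℝ (Fin (d + 1)) → ℝ),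
      Measurable bbar ∧ (∀ θ, |bbar θ| ≤ C * ρ θ) ∧
      ∀ s : ↥Sset,
        |Vstar s - (bbar₀ + ∫ θ, bbar θ * phi d phibar θ (s : EuclideanSpace ℝ (Fin d)))| ≤ ε) :
    ∫ s, |Vstar s - VFE s| ∂ν ≤ 2 * ε / (1 - γ) := by
  obtain ⟨C, bbar₀, bbar, hbbar_meas, hbbar_le, happrox⟩ := hRC
  obtain ⟨CFE, hbFE_le⟩ := hbFE_fin
  have hρ_nonneg θ : 0 ≤ ρ θ := (hρ_pos θ).le
  have hρ_int := integrable_of_isProbabilityMeasure_withDensity hρ_meas hρ_nonneg hρ_prob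
  have hρ_one := integral_eq_one_of_isProbabilityMeasure_withDensity hρ_meas hρ_nonneg hρ_prob
  have hphibar_cont := hLip.continuous
  have hVFE_meas : Measurable VFE := by
    rw [funext hVFE]
    exact measurable_const.add
      ((measurable_integral_mul_phi hphibar_cont hbFE_meas).comp measurable_subtype_coe)
  have hVFE_bdd : ∃ M, ∀ s, |VFE s| ≤ M := ⟨|b₀FE| + CFE, fun s => by
    have := abs_integral_mul_le_of_abs_le_mul (g := fun θ => phi d phibar θ s) hρ_int hbFE_le
      fun θ => hphibar_bdd _
    rw [hVFE s, ← mul_one CFE, ← hρ_one]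
    exact (abs_add_le _ _).trans (by gcongr)⟩
  have hVstar : IsBellmanSolution Act c γ P Vstar := hBellman
  refine hVstar.integral_abs_sub_le_of_optimal
    (W := fun s : Sset => bbar₀ + ∫ θ, bbar θ * phi d phibar θ s) hAct hc_bdd hγ0 hγ1
    hVstar_meas hVstar_bdd hVFE_meas hVFE_bdd hVFE_ALP
    (measurable_const.add ((measurable_integral_mul_phi hphibar_cont hbbar_meas).comp
      measurable_subtype_coe)) happrox fun k hk => ?_
  simp only [add_sub_right_comm bbar₀] at hk ⊢
  exact hVFE_opt (bbar₀ - k) bbar hbbar_meas ⟨C, hbbar_le⟩ hk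

/-- Optimal FELP solutions are `2ε/(1−γ)`-close to `V*` in `(1,ν)`-norm,
provided some pair `(bbar₀, bbar)` with `‖bbar‖_{∞,ρ} ≤ C < ∞` gives a uniform `ε`-approximation
of `V*`. -/
theorem stmt_2
    {d : ℕ} (Sset : Set (EuclideanSpace ℝ (Fin d)))
    (D : ℝ) (hD : ∀ s ∈ Sset, Real.sqrt (1 + ‖s‖ ^ 2) ≤ D + 1)
    {A : Type*} [MeasurableSpace A]
    (Act : ↥Sset → Set A) (hAct : ∀ s, (Act s).Nonempty)
    (c : ↥Sset × A → ℝ) (hc_meas : Measurable c) (hc_bdd : ∃ M, ∀ p, |c p| ≤ M)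
    (γ : ℝ) (hγ0 : 0 ≤ γ) (hγ1 : γ < 1)
    (P : Kernel (↥Sset × A) ↥Sset) [IsMarkovKernel P]
    (Vstar : ↥Sset → ℝ) (hVstar_meas : Measurable Vstar)
    (hVstar_bdd : ∃ M, ∀ s, |Vstar s| ≤ M)
    (hBellman : ∀ s : ↥Sset,
      Vstar s = ⨅ a : Act s, (c (s, (a : A)) + γ * ∫ s', Vstar s' ∂(P (s, (a : A)))))
    (L : NNReal) (phibar : ℝ → ℝ) (hLip : LipschitzWith L phibar)
    (hphibar_bdd : ∀ x, |phibar x| ≤ 1)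
    (ρ : EuclideanSpace ℝ (Fin (d + 1)) → ℝ) (hρ_meas : Measurable ρ)
    (hρ_pos : ∀ θ, 0 < ρ θ)
    (hρ_prob : IsProbabilityMeasure (volume.withDensity fun θ => ENNReal.ofReal (ρ θ)))
    (ν : Measure ↥Sset) [IsProbabilityMeasure ν]
    (ε : ℝ) (hε : 0 < ε)
    -- the optimal FELP solution (b₀FE, bFE) with value function VFE
    (b₀FE : ℝ) (bFE : EuclideanSpace ℝ (Fin (d + 1)) → ℝ) (hbFE_meas : Measurable bFE)
    (hbFE_fin : ∃ C : ℝ, ∀ θ, |bFE θ| ≤ C * ρ θ)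
    (VFE : ↥Sset → ℝ)
    (hVFE : ∀ s : ↥Sset, VFE s = b₀FE + ∫ θ, bFE θ * phi d phibar θ (s : EuclideanSpace ℝ (Fin d)))
    (hVFE_ALP : ∀ s : ↥Sset, ∀ a ∈ Act s,
      VFE s - γ * ∫ s', VFE s' ∂(P (s, a)) ≤ c (s, a))
    (hVFE_opt : ∀ (b₀ : ℝ) (b : EuclideanSpace ℝ (Fin (d + 1)) → ℝ), Measurable b →
      (∃ C : ℝ, ∀ θ, |b θ| ≤ C * ρ θ) →
      (∀ s : ↥Sset, ∀ a ∈ Act s,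
        (b₀ + ∫ θ, b θ * phi d phibar θ (s : EuclideanSpace ℝ (Fin d)))
          - γ * ∫ s', (b₀ + ∫ θ, b θ * phi d phibar θ (s' : EuclideanSpace ℝ (Fin d)))
              ∂(P (s, a)) ≤ c (s, a)) →
      ∫ s, (b₀ + ∫ θ, b θ * phi d phibar θ (s : EuclideanSpace ℝ (Fin d))) ∂ν
        ≤ ∫ s, VFE s ∂ν)
    -- a uniformly ε-accurate function in R_C(φ, ρ)
    (hRC : ∃ (C : ℝ) (bbar₀ : ℝ) (bbar : EuclideanSpace ℝ (Fin (d + 1)) → ℝ),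
      Measurable bbar ∧ (∀ θ, |bbar θ| ≤ C * ρ θ) ∧
      ∀ s : ↥Sset,
        |Vstar s - (bbar₀ + ∫ θ, bbar θ * phi d phibar θ (s : EuclideanSpace ℝ (Fin d)))| ≤ ε) :
    ∫ s, |Vstar s - VFE s| ∂ν ≤ 2 * ε / (1 - γ) :=
  stmt_2_general Sset Act hAct c hc_bdd γ hγ0 hγ1 P Vstar hVstar_meas hVstar_bdd hBellman L phibar
    hLip hphibar_bdd ρ hρ_meas hρ_pos hρ_prob ν ε b₀FE bFE hbFE_meas hbFE_fin VFE hVFE hVFE_ALP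
    hVFE_opt hRC
end

section
/- Let ε > 0 and suppose: (a) V^ε : S → ℝ is bounded measurable, satisfies the ALP (Bellman) constraints, and sup_{s∈S} |V*(s) − V^ε(s)| ≤ 2ε/(1−γ); (b) V : S → ℝ is bounded measurable with sup_{s∈S} |V^ε(s) − V(s)| ≤ ε; and (c) W : S → ℝ satisfies W(s) ≤ V*(s) for all s ∈ S. Then: (i) the shifted function V − Γε satisfies the ALP (Bellman) constraints; (ii) W(s) ≤ (V(s) − Γε) + 4ε/(1−γ) for every s ∈ S; and (iii) sup_{s∈S} |V*(s) − (V(s) − Γε)| ≤ 4ε/(1−γ). -/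
open MeasureTheory ProbabilityTheory

/-- Suppose `V^ε` is bounded measurable, satisfies the ALP constraints and
`sup|V* − V^ε| ≤ 2ε/(1−γ)`; `V` is bounded measurable with `sup|V^ε − V| ≤ ε`; and
`W ≤ V*` pointwise. Then `V − Γε` satisfies the ALP constraints,
`W ≤ (V − Γε) + 4ε/(1−γ)` pointwise, and `sup|V* − (V − Γε)| ≤ 4ε/(1−γ)`. -/
theorem stmt_8
    {S A : Type*} [MeasurableSpace S] [MeasurableSpace A]
    (Act : S → Set A) (hAct : ∀ s, (Act s).Nonempty)
    (c : S × A → ℝ) (hc_meas : Measurable c) (hc_bdd : ∃ M, ∀ p, |c p| ≤ M)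
    (γ : ℝ) (hγ0 : 0 ≤ γ) (hγ1 : γ < 1)
    (P : Kernel (S × A) S) [IsMarkovKernel P]
    (Vstar : S → ℝ) (hVstar_meas : Measurable Vstar)
    (hVstar_bdd : ∃ M, ∀ s, |Vstar s| ≤ M)
    (hBellman : ∀ s : S,
      Vstar s = ⨅ a : Act s, (c (s, (a : A)) + γ * ∫ s', Vstar s' ∂(P (s, (a : A)))))
    (Γ : ℝ) (hΓ : Γ = (1 + γ) / (1 - γ))
    (ε : ℝ) (hε : 0 < ε)
    (Vε : S → ℝ) (hVε_meas : Measurable Vε) (hVε_bdd : ∃ M, ∀ s, |Vε s| ≤ M)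
    (hVε_ALP : ∀ s : S, ∀ a ∈ Act s, Vε s - γ * ∫ s', Vε s' ∂(P (s, a)) ≤ c (s, a))
    (hVε_close : ∀ s : S, |Vstar s - Vε s| ≤ 2 * ε / (1 - γ))
    (V : S → ℝ) (hV_meas : Measurable V) (hV_bdd : ∃ M, ∀ s, |V s| ≤ M)
    (hV_close : ∀ s : S, |Vε s - V s| ≤ ε)
    (W : S → ℝ) (hW : ∀ s : S, W s ≤ Vstar s) :
    (∀ s : S, ∀ a ∈ Act s,
        (V s - Γ * ε) - γ * ∫ s', (V s' - Γ * ε) ∂(P (s, a)) ≤ c (s, a)) ∧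
      (∀ s : S, W s ≤ (V s - Γ * ε) + 4 * ε / (1 - γ)) ∧
      (∀ s : S, |Vstar s - (V s - Γ * ε)| ≤ 4 * ε / (1 - γ)) := by

  have h1γ : (0:ℝ) < 1 - γ := by linarith
  obtain ⟨MV, hMV⟩ := hV_bdd
  obtain ⟨Mε, hMε⟩ := hVε_bdd
  have hIntV : ∀ s a, Integrable V (P (s, a)) := fun s a =>
    (integrable_const MV).mono' hV_meas.aestronglyMeasurable
      (ae_of_all _ fun x => by simpa using hMV x)
  have hIntVε : ∀ s a, Integrable Vε (P (s, a)) := fun s a =>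
    (integrable_const Mε).mono' hVε_meas.aestronglyMeasurable
      (ae_of_all _ fun x => by simpa using hMε x)
  have hIntClose : ∀ s a, |(∫ s', Vε s' ∂(P (s, a))) - ∫ s', V s' ∂(P (s, a))| ≤ ε := by
    intro s a
    rw [← integral_sub (hIntVε s a) (hIntV s a), ← Real.norm_eq_abs]
    calc ‖∫ s', (Vε s' - V s') ∂(P (s, a))‖ ≤ ε * ((P (s, a)) Set.univ).toReal :=
          norm_integral_le_of_norm_le_const
            (ae_of_all _ fun x => by simpa using hV_close x)
      _ = ε := by simp
  have hGε : (1 - γ) * (Γ * ε) = (1 + γ) * ε := by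
    rw [hΓ]; field_simp; try ring
  have hΓ0 : 0 ≤ Γ * ε := by
    rw [hΓ]; positivity
  have hALP : ∀ s : S, ∀ a ∈ Act s,
      (V s - Γ * ε) - γ * ∫ s', (V s' - Γ * ε) ∂(P (s, a)) ≤ c (s, a) := by
    intro s a ha
    have hint : ∫ s', (V s' - Γ * ε) ∂(P (s, a)) = (∫ s', V s' ∂(P (s, a))) - Γ * ε := by
      rw [integral_sub (hIntV s a) (integrable_const _)]
      simp
    rw [hint]
    have h1 := hVε_ALP s a ha
    have h2 := abs_le.1 (hV_close s)
    have h3 := abs_le.1 (hIntClose s a)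
    nlinarith [mul_le_mul_of_nonneg_left h3.1 hγ0, mul_le_mul_of_nonneg_left h3.2 hγ0]
  have heq : ε + Γ * ε = 2 * ε / (1 - γ) := by
    rw [hΓ]; field_simp; try ring
  have hClose : ∀ s : S, |Vstar s - (V s - Γ * ε)| ≤ 4 * ε / (1 - γ) := by
    intro s
    have h1 := hVε_close s
    calc |Vstar s - (V s - Γ * ε)|
        = |(Vstar s - Vε s) + ((Vε s - V s) + Γ * ε)| := by ring_nf
      _ ≤ |Vstar s - Vε s| + |(Vε s - V s) + Γ * ε| := abs_add_le _ _
      _ ≤ |Vstar s - Vε s| + (|Vε s - V s| + |Γ * ε|) := by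
          linarith [abs_add_le (Vε s - V s) (Γ * ε)]
      _ ≤ 2 * ε / (1 - γ) + (ε + Γ * ε) := by
          have := hV_close s
          rw [abs_of_nonneg hΓ0]
          linarith
      _ = 4 * ε / (1 - γ) := by rw [heq]; ring
  refine ⟨hALP, fun s => ?_, hClose⟩
  have := (abs_le.1 (hClose s)).2
  linarith [hW s]
end

section
/- Assume ρ(θ) ≤ U_ρ for all θ ∈ Θ with U_ρ ≥ 1. Let θ₁,…,θ_N ∈ Θ be distinct and let α ∈ (0, min_{i≠j} ‖θ_i − θ_j‖₂), so that the closed balls B(θ_i, α) are pairwise disjoint; assume z_i := μ_ρ(B(θ_i,α)) > 0 for each i and set φ_{i,α}(θ) := ρ(θ)·1{‖θ − θ_i‖₂ ≤ α}/z_i. Let b : Θ → ℝ belong to the closure, with respect to the norm ‖·‖_{2,ρ}, of the linear span of {φ_{1,α},…,φ_{N,α}}. Then for every ξ > 0 and every b₀ ∈ ℝ there exist β₁,…,β_N ∈ ℝ such that sup_{s∈S} | ( b₀ + ∫_Θ b(θ) φ(s;θ) dθ ) − ( b₀ + Σ_{i=1}^N β_i φ(s;θ_i) ) | ≤ √U_ρ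 · ξ + α · √(N U_ρ) · L · (D+1) · ( ‖b‖_{2,ρ} + ξ ). -/
/-!
Choose `c` with `‖b - ∑ cᵢ φᵢ,α‖_{2,ρ} ≤ ξ` and use `β = c`. Since `ρ` is a probability density,
Cauchy–Schwarz gives `∫ |g| ≤ ‖g‖_{2,ρ}`, so with `|φ| ≤ 1` the remainder `g = b - ∑ cᵢ φᵢ,α`
contributes at most `ξ`. The map `θ ↦ φ(s;θ) = φ̄⟨(1,s),θ⟩` is `L(D+1)`-Lipschitz and `φᵢ,α` is a
unit mass on `B(θᵢ, α)`, so `∫ φᵢ,α φ(s;·)` differs from `φ(s;θᵢ)` by at most `αL(D+1)`. Finally,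
as the balls are disjoint, `cᵢ` is the mass of `∑ cⱼ φⱼ,α` on `B(θᵢ, α)`, whence
`∑ |cᵢ| ≤ ∫ |∑ cⱼ φⱼ,α| ≤ ‖b‖_{2,ρ} + ξ`.
-/

open MeasureTheory ProbabilityTheory

/-- The sampling measure `μ_ρ` on `Θ = ℝ^{d+1}`, with density `ρ` w.r.t. Lebesgue. -/
noncomputable def muRho (d : ℕ) (ρ : EuclideanSpace ℝ (Fin (d + 1)) → ℝ) :
    Measure (EuclideanSpace ℝ (Fin (d + 1))) :=
  volume.withDensity fun θ => ENNReal.ofReal (ρ θ)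

/-- The norm `‖b‖_{2,ρ} = ( ∫_Θ b(θ)²/ρ(θ) dθ )^{1/2}`. -/
noncomputable def l2Rho (d : ℕ) (ρ b : EuclideanSpace ℝ (Fin (d + 1)) → ℝ) : ℝ :=
  Real.sqrt (∫ θ, (b θ) ^ 2 / ρ θ)

/-- The normalized local bump `φ_{i,α}(θ) = ρ(θ) 1{‖θ − θᵢ‖ ≤ α} / zᵢ`. -/
noncomputable def stump (d : ℕ) (ρ : EuclideanSpace ℝ (Fin (d + 1)) → ℝ)
    (θi : EuclideanSpace ℝ (Fin (d + 1))) (α zi : ℝ)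
    (t : EuclideanSpace ℝ (Fin (d + 1))) : ℝ :=
  ρ t * (if dist t θi ≤ α then 1 else 0) / zi

lemma two_mul_mul_abs_le_sq_div_add (x c : ℝ) {r : ℝ} (hr : 0 < r) :
    2 * c * |x| ≤ x ^ 2 / r + r * c ^ 2 := by
  have hsq : x ^ 2 / r + r * c ^ 2 - 2 * c * |x| = (|x| - r * c) ^ 2 / r := by
    field_simp
    rw [← sq_abs x]
    ring
  have : 0 ≤ (|x| - r * c) ^ 2 / r := by positivity
  linarith

section WeightedL2

variable {X : Type*} [MeasurableSpace X] {μ : Measure X} {ρ g : X → ℝ}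

lemma integrable_of_integrable_sq_div (hρ_pos : ∀ x, 0 < ρ x) (hρ : Integrable ρ μ)
    (hg : AEStronglyMeasurable g μ) (hg2 : Integrable (fun x => g x ^ 2 / ρ x) μ) :
    Integrable g μ := by
  refine ((hg2.add hρ).div_const 2).mono' hg (ae_of_all _ fun x => ?_)
  have := two_mul_mul_abs_le_sq_div_add (g x) 1 (hρ_pos x)
  simp only [Pi.add_apply, Real.norm_eq_abs]
  linarith

/-- Optimize the pointwise bound `2ξ|g| ≤ g²/ρ + ξ²ρ` over `ξ > √(∫ g²/ρ)`. -/
lemma integral_abs_le_sqrt_integral_sq_div (hρ_pos : ∀ x, 0 < ρ x) (hρ : Integrable ρ μ)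
    (hρ_one : ∫ x, ρ x ∂μ = 1) (hg : AEStronglyMeasurable g μ)
    (hg2 : Integrable (fun x => g x ^ 2 / ρ x) μ) :
    ∫ x, |g x| ∂μ ≤ √(∫ x, g x ^ 2 / ρ x ∂μ) := by
  refine le_of_forall_gt_imp_ge_of_dense fun ξ hξ => ?_
  have hξ0 : 0 < ξ := (Real.sqrt_nonneg _).trans_lt hξ
  have hQ : ∫ x, g x ^ 2 / ρ x ∂μ < ξ ^ 2 := (Real.sqrt_lt' hξ0).mp hξ
  have hamgm : 2 * ξ * ∫ x, |g x| ∂μ ≤ ∫ x, g x ^ 2 / ρ x ∂μ + ξ ^ 2 :=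
    calc 2 * ξ * ∫ x, |g x| ∂μ = ∫ x, 2 * ξ * |g x| ∂μ := (integral_const_mul _ _).symm
      _ ≤ ∫ x, (g x ^ 2 / ρ x + ρ x * ξ ^ 2) ∂μ :=
        integral_mono ((integrable_of_integrable_sq_div hρ_pos hρ hg hg2).abs.const_mul _)
          (hg2.add (hρ.mul_const _))
          fun x => two_mul_mul_abs_le_sq_div_add (g x) ξ (hρ_pos x)
      _ = ∫ x, g x ^ 2 / ρ x ∂μ + ξ ^ 2 := by
        rw [integral_add hg2 (hρ.mul_const _), integral_mul_const, hρ_one, one_mul]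
  nlinarith

end WeightedL2

section SetIntegral

variable {X : Type*} [MeasurableSpace X] {μ : Measure X}

lemma sum_abs_setIntegral_le_integral_abs {ι : Type*} (t : Finset ι) {s : ι → Set X}
    (hs : ∀ i, MeasurableSet (s i)) (hd : Pairwise fun i j => Disjoint (s i) (s j)) {f : X → ℝ}
    (hf : Integrable f μ) :
    ∑ i ∈ t, |∫ x in s i, f x ∂μ| ≤ ∫ x, |f x| ∂μ :=
  calc ∑ i ∈ t, |∫ x in s i, f x ∂μ| ≤ ∑ i ∈ t, ∫ x in s i, |f x| ∂μ :=
        Finset.sum_le_sum fun _ _ => abs_integral_le_integral_abs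
    _ = ∫ x in ⋃ i ∈ t, s i, |f x| ∂μ :=
        (integral_biUnion_finset t (fun i _ => hs i) (fun _ _ _ _ hij => hd hij)
          fun _ _ => hf.abs.integrableOn).symm
    _ ≤ ∫ x, |f x| ∂μ := setIntegral_le_integral hf.abs (ae_of_all _ fun _ => abs_nonneg _)

lemma abs_setIntegral_mul_sub_le {s : Set X} {w F : X → ℝ} {x₀ : X} {K : ℝ}
    (hs : MeasurableSet s) (hw_nonneg : ∀ x ∈ s, 0 ≤ w x) (hw : IntegrableOn w s μ)
    (hw_one : ∫ x in s, w x ∂μ = 1) (hF : AEStronglyMeasurable F (μ.restrict s))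
    (hFK : ∀ x ∈ s, |F x - F x₀| ≤ K) :
    |(∫ x in s, w x * F x ∂μ) - F x₀| ≤ K := by
  have hdev : IntegrableOn (fun x => w x * (F x - F x₀)) s μ :=
    hw.mul_bdd (hF.sub aestronglyMeasurable_const)
      (ae_restrict_of_forall_mem hs fun x hx => (Real.norm_eq_abs _).trans_le (hFK x hx))
  have hmean : (∫ x in s, w x * F x ∂μ) - F x₀ = ∫ x in s, w x * (F x - F x₀) ∂μ := by
    have hsplit : (fun x => w x * F x) = fun x => w x * (F x - F x₀) + w x * F x₀ := by
      ext x; ring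
    rw [hsplit, integral_add hdev (hw.mul_const _), integral_mul_const, hw_one, one_mul,
      add_sub_cancel_right]
  rw [hmean]
  calc |∫ x in s, w x * (F x - F x₀) ∂μ| ≤ ∫ x in s, |w x * (F x - F x₀)| ∂μ :=
        abs_integral_le_integral_abs
    _ ≤ ∫ x in s, w x * K ∂μ := by
        refine setIntegral_mono_on hdev.abs (hw.mul_const _) hs fun x hx => ?_
        rw [abs_mul, abs_of_nonneg (hw_nonneg x hx)]
        exact mul_le_mul_of_nonneg_left (hFK x hx) (hw_nonneg x hx)
    _ = K := by rw [integral_mul_const, hw_one, one_mul]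

end SetIntegral

noncomputable def consOne {d : ℕ} (s : EuclideanSpace ℝ (Fin d)) : EuclideanSpace ℝ (Fin (d + 1)) :=
  WithLp.toLp 2 (Fin.cons 1 s.ofLp)

section BasisFunction

variable {d : ℕ} {phibar : ℝ → ℝ}

lemma phi_eq_inner (θ : EuclideanSpace ℝ (Fin (d + 1))) (s : EuclideanSpace ℝ (Fin d)) :
    phi d phibar θ s = phibar (inner ℝ (consOne s) θ) := by
  simp [phi, consOne, PiLp.inner_apply, Fin.sum_univ_succ, mul_comm]

lemma norm_consOne (s : EuclideanSpace ℝ (Fin d)) : ‖consOne s‖ = √(1 + ‖s‖ ^ 2) := by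
  rw [EuclideanSpace.norm_eq, EuclideanSpace.norm_eq, Real.sq_sqrt (by positivity)]
  simp [consOne, Fin.sum_univ_succ]

lemma lipschitzWith_phi {L : NNReal} (hLip : LipschitzWith L phibar)
    (s : EuclideanSpace ℝ (Fin d)) :
    LipschitzWith (L * ‖consOne s‖₊) fun θ => phi d phibar θ s := by
  refine LipschitzWith.of_dist_le_mul fun θ θ' => ?_
  rw [phi_eq_inner, phi_eq_inner, NNReal.coe_mul, coe_nnnorm, mul_assoc]
  refine (hLip.dist_le_mul _ _).trans (mul_le_mul_of_nonneg_left ?_ L.coe_nonneg)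
  simpa [innerSL_apply_norm] using (innerSL ℝ (consOne s)).lipschitz.dist_le_mul θ θ'

end BasisFunction

section Bumps

variable {d : ℕ} {ρ : EuclideanSpace ℝ (Fin (d + 1)) → ℝ}

lemma muRho_toReal_apply (hρ_meas : Measurable ρ) (hρ_nonneg : ∀ t, 0 ≤ ρ t)
    {s : Set (EuclideanSpace ℝ (Fin (d + 1)))} (hs : MeasurableSet s) :
    (muRho d ρ s).toReal = ∫ t in s, ρ t := by
  rw [muRho, withDensity_apply _ hs, integral_eq_lintegral_of_nonneg_ae
    (ae_of_all _ hρ_nonneg) hρ_meas.aestronglyMeasurable.restrict]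

lemma integrable_of_isFiniteMeasure_muRho (hρ_meas : Measurable ρ) (hρ_nonneg : ∀ t, 0 ≤ ρ t)
    [IsFiniteMeasure (muRho d ρ)] : Integrable ρ := by
  refine ⟨hρ_meas.aestronglyMeasurable,
    (hasFiniteIntegral_iff_ofReal (ae_of_all _ hρ_nonneg)).mpr ?_⟩
  have := measure_lt_top (muRho d ρ) Set.univ
  rwa [muRho, withDensity_apply _ MeasurableSet.univ, Measure.restrict_univ] at this

lemma integral_eq_one_of_isProbabilityMeasure_muRho (hρ_meas : Measurable ρ)
    (hρ_nonneg : ∀ t, 0 ≤ ρ t) [IsProbabilityMeasure (muRho d ρ)] : ∫ t, ρ t = 1 := by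
  rw [← setIntegral_univ, ← muRho_toReal_apply hρ_meas hρ_nonneg MeasurableSet.univ,
    measure_univ, ENNReal.toReal_one]

lemma stump_eq_indicator (θi : EuclideanSpace ℝ (Fin (d + 1))) (α zi : ℝ) :
    stump d ρ θi α zi = (Metric.closedBall θi α).indicator fun t => ρ t / zi := by
  ext t
  simp only [stump, Set.indicator, Metric.mem_closedBall]
  split_ifs <;> ring

lemma integrable_stump (hρ : Integrable ρ) (θi : EuclideanSpace ℝ (Fin (d + 1))) (α zi : ℝ) :
    Integrable (stump d ρ θi α zi) := by
  rw [stump_eq_indicator]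
  exact (hρ.div_const _).indicator measurableSet_closedBall

lemma abs_integral_stump_mul_sub_le (hρ_nonneg : ∀ t, 0 ≤ ρ t) (hρ : Integrable ρ)
    {θi : EuclideanSpace ℝ (Fin (d + 1))} {α zi : ℝ}
    (hz : ∫ t in Metric.closedBall θi α, ρ t = zi) (hzi : 0 < zi)
    {F : EuclideanSpace ℝ (Fin (d + 1)) → ℝ} {K : NNReal} (hF : LipschitzWith K F) :
    |(∫ t, stump d ρ θi α zi t * F t) - F θi| ≤ K * α := by
  have hind : (fun t => stump d ρ θi α zi t * F t)
      = (Metric.closedBall θi α).indicator fun t => ρ t / zi * F t := by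
    ext t
    rw [stump_eq_indicator, Set.indicator_mul_left]
  rw [hind, integral_indicator measurableSet_closedBall]
  refine abs_setIntegral_mul_sub_le measurableSet_closedBall
    (fun t _ => div_nonneg (hρ_nonneg t) hzi.le) (hρ.div_const _).integrableOn
    (by rw [integral_div, hz, div_self hzi.ne']) hF.continuous.aestronglyMeasurable
    fun t ht => ?_
  rw [← Real.dist_eq]
  exact (hF.dist_le_mul t θi).trans
    (mul_le_mul_of_nonneg_left (Metric.mem_closedBall.mp ht) K.coe_nonneg)

variable {N : ℕ} {θ : Fin N → EuclideanSpace ℝ (Fin (d + 1))} {α : ℝ} {z c : Fin N → ℝ}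

lemma sum_mul_stump_of_mem
    (hdisj : Pairwise fun i j =>
      Disjoint (Metric.closedBall (θ i) α) (Metric.closedBall (θ j) α))
    {i : Fin N} {t : EuclideanSpace ℝ (Fin (d + 1))} (ht : t ∈ Metric.closedBall (θ i) α) :
    ∑ j, c j * stump d ρ (θ j) α (z j) t = c i * (ρ t / z i) := by
  rw [Finset.sum_eq_single_of_mem i (Finset.mem_univ i), stump_eq_indicator,
    Set.indicator_of_mem ht]
  intro j _ hji
  rw [stump_eq_indicator,
    Set.indicator_of_notMem (Set.disjoint_left.mp (hdisj hji.symm) ht), mul_zero]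

lemma setIntegral_sum_mul_stump
    (hdisj : Pairwise fun i j =>
      Disjoint (Metric.closedBall (θ i) α) (Metric.closedBall (θ j) α))
    {i : Fin N} (hz : ∫ t in Metric.closedBall (θ i) α, ρ t = z i) (hzi : z i ≠ 0) :
    ∫ t in Metric.closedBall (θ i) α, ∑ j, c j * stump d ρ (θ j) α (z j) t = c i := by
  rw [setIntegral_congr_fun measurableSet_closedBall fun t ht => sum_mul_stump_of_mem hdisj ht,
    integral_const_mul, integral_div, hz, div_self hzi, mul_one]

lemma sum_abs_le_integral_abs_sum_mul_stump (hρ : Integrable ρ)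
    (hdisj : Pairwise fun i j =>
      Disjoint (Metric.closedBall (θ i) α) (Metric.closedBall (θ j) α))
    (hz : ∀ i, ∫ t in Metric.closedBall (θ i) α, ρ t = z i) (hz_ne : ∀ i, z i ≠ 0) :
    ∑ i, |c i| ≤ ∫ t, |∑ j, c j * stump d ρ (θ j) α (z j) t| :=
  calc ∑ i, |c i|
      = ∑ i, |∫ t in Metric.closedBall (θ i) α, ∑ j, c j * stump d ρ (θ j) α (z j) t| :=
        Finset.sum_congr rfl fun i _ => by rw [setIntegral_sum_mul_stump hdisj (hz i) (hz_ne i)]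
    _ ≤ _ := sum_abs_setIntegral_le_integral_abs _ (fun _ => measurableSet_closedBall) hdisj
        (integrable_finsetSum _ fun j _ => (integrable_stump hρ _ _ _).const_mul (c j))

lemma sum_abs_le_integral_abs_add_integral_abs_sub (hρ : Integrable ρ)
    (hdisj : Pairwise fun i j =>
      Disjoint (Metric.closedBall (θ i) α) (Metric.closedBall (θ j) α))
    (hz : ∀ i, ∫ t in Metric.closedBall (θ i) α, ρ t = z i) (hz_ne : ∀ i, z i ≠ 0)
    {b : EuclideanSpace ℝ (Fin (d + 1)) → ℝ} (hb : Integrable b) :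
    ∑ i, |c i| ≤ (∫ t, |b t|) + ∫ t, |b t - ∑ j, c j * stump d ρ (θ j) α (z j) t| := by
  have hh : Integrable fun t => ∑ j, c j * stump d ρ (θ j) α (z j) t :=
    integrable_finsetSum _ fun j _ => (integrable_stump hρ _ _ _).const_mul (c j)
  calc ∑ i, |c i| ≤ ∫ t, |∑ j, c j * stump d ρ (θ j) α (z j) t| :=
        sum_abs_le_integral_abs_sum_mul_stump hρ hdisj hz hz_ne
    _ ≤ ∫ t, (|b t| + |b t - ∑ j, c j * stump d ρ (θ j) α (z j) t|) :=
        integral_mono hh.abs (hb.abs.add (hb.sub hh).abs) fun t => by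
          simpa only [sub_sub_cancel] using
            abs_sub (b t) (b t - ∑ j, c j * stump d ρ (θ j) α (z j) t)
    _ = _ := integral_add hb.abs (hb.sub hh).abs

lemma abs_integral_mul_sub_sum_mul_le (hρ_nonneg : ∀ t, 0 ≤ ρ t) (hρ : Integrable ρ)
    (hz : ∀ i, ∫ t in Metric.closedBall (θ i) α, ρ t = z i) (hz_pos : ∀ i, 0 < z i)
    {b F : EuclideanSpace ℝ (Fin (d + 1)) → ℝ} {K : NNReal} (hb : Integrable b)
    (hF : LipschitzWith K F) (hF_bdd : ∀ t, |F t| ≤ 1) :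
    |(∫ t, b t * F t) - ∑ i, c i * F (θ i)|
      ≤ (∫ t, |b t - ∑ i, c i * stump d ρ (θ i) α (z i) t|) + (∑ i, |c i|) * (K * α) := by
  set h := fun t => ∑ i, c i * stump d ρ (θ i) α (z i) t
  have hF_norm : ∀ᵐ t, ‖F t‖ ≤ 1 := ae_of_all _ fun t => (Real.norm_eq_abs _).trans_le (hF_bdd t)
  have hstF : ∀ i, Integrable fun t => stump d ρ (θ i) α (z i) t * F t := fun i =>
    (integrable_stump hρ _ _ _).mul_bdd hF.continuous.aestronglyMeasurable hF_norm
  have hg : Integrable fun t => b t - h t :=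
    hb.sub (integrable_finsetSum _ fun i _ => (integrable_stump hρ _ _ _).const_mul (c i))
  have hgF : Integrable fun t => (b t - h t) * F t :=
    hg.mul_bdd hF.continuous.aestronglyMeasurable hF_norm
  have hsplit : (∫ t, b t * F t) - ∑ i, c i * F (θ i)
      = (∫ t, (b t - h t) * F t)
        + ∑ i, c i * ((∫ t, stump d ρ (θ i) α (z i) t * F t) - F (θ i)) := by
    have hbF : (fun t => b t * F t)
        = fun t => (b t - h t) * F t + ∑ i, c i * (stump d ρ (θ i) α (z i) t * F t) := by
      ext t
      simp only [h, sub_mul, Finset.sum_mul, mul_assoc, sub_add_cancel]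
    rw [hbF, integral_add hgF (integrable_finsetSum _ fun i _ => (hstF i).const_mul (c i)),
      integral_finsetSum _ fun i _ => (hstF i).const_mul (c i)]
    simp only [integral_const_mul, mul_sub, Finset.sum_sub_distrib]
    ring
  rw [hsplit]
  refine (abs_add_le _ _).trans (add_le_add ?_ ?_)
  · refine abs_integral_le_integral_abs.trans (integral_mono hgF.abs hg.abs fun t => ?_)
    rw [abs_mul]
    exact mul_le_of_le_one_right (abs_nonneg _) (hF_bdd t)
  · refine (Finset.abs_sum_le_sum_abs _ _).trans ?_
    rw [Finset.sum_mul]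
    refine Finset.sum_le_sum fun i _ => ?_
    rw [abs_mul]
    exact mul_le_mul_of_nonneg_left
      (abs_integral_stump_mul_sub_le hρ_nonneg hρ (hz i) (hz_pos i) hF) (abs_nonneg _)

end Bumps

theorem stmt_10_general
    {d : ℕ} (Sset : Set (EuclideanSpace ℝ (Fin d)))
    (D : ℝ) (hD : ∀ s ∈ Sset, Real.sqrt (1 + ‖s‖ ^ 2) ≤ D + 1)
    (L : NNReal) (phibar : ℝ → ℝ) (hLip : LipschitzWith L phibar)
    (hphibar_bdd : ∀ x, |phibar x| ≤ 1)
    (ρ : EuclideanSpace ℝ (Fin (d + 1)) → ℝ) (hρ_meas : Measurable ρ)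
    (hρ_pos : ∀ θ, 0 < ρ θ) (hρ_prob : IsProbabilityMeasure (muRho d ρ))
    (Uρ : ℝ) (hUρ : 1 ≤ Uρ)
    (N : ℕ) (θ : Fin N → EuclideanSpace ℝ (Fin (d + 1)))
    (α : ℝ) (hα0 : 0 < α)
    (hdisj : Pairwise fun i j =>
      Disjoint (Metric.closedBall (θ i) α) (Metric.closedBall (θ j) α))
    (z : Fin N → ℝ)
    (hz : ∀ i, z i = (muRho d ρ (Metric.closedBall (θ i) α)).toReal)
    (hz_pos : ∀ i, 0 < z i)
    (b : EuclideanSpace ℝ (Fin (d + 1)) → ℝ) (hb_meas : Measurable b)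
    (hb_l2 : Integrable (fun t => (b t) ^ 2 / ρ t))
    (hb_closure : ∀ ξ : ℝ, 0 < ξ → ∃ cvec : Fin N → ℝ,
      Integrable (fun t => (b t - ∑ i : Fin N, cvec i * stump d ρ (θ i) α (z i) t) ^ 2 / ρ t) ∧
      l2Rho d ρ (fun t => b t - ∑ i : Fin N, cvec i * stump d ρ (θ i) α (z i) t) ≤ ξ) :
    ∀ ξ : ℝ, 0 < ξ → ∀ b₀ : ℝ, ∃ β : Fin N → ℝ, ∀ s ∈ Sset,
      |(b₀ + ∫ t, b t * phi d phibar t s)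
          - (b₀ + ∑ i : Fin N, β i * phi d phibar (θ i) s)|
        ≤ Real.sqrt Uρ * ξ
          + α * Real.sqrt ((N : ℝ) * Uρ) * (L : ℝ) * (D + 1) * (l2Rho d ρ b + ξ) := by
  intro ξ hξ b₀
  obtain ⟨c, hg2, hgξ⟩ := hb_closure ξ hξ
  set h := fun t => ∑ i, c i * stump d ρ (θ i) α (z i) t
  have hρ_nonneg : ∀ t, 0 ≤ ρ t := fun t => (hρ_pos t).le
  have hρ := integrable_of_isFiniteMeasure_muRho hρ_meas hρ_nonneg
  have hρ_one := integral_eq_one_of_isProbabilityMeasure_muRho hρ_meas hρ_nonneg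
  have hz_int : ∀ i, ∫ t in Metric.closedBall (θ i) α, ρ t = z i := fun i => by
    rw [hz i, muRho_toReal_apply hρ_meas hρ_nonneg measurableSet_closedBall]
  have hb := integrable_of_integrable_sq_div hρ_pos hρ hb_meas.aestronglyMeasurable hb_l2
  have hg : Integrable fun t => b t - h t :=
    hb.sub (integrable_finsetSum _ fun i _ => (integrable_stump hρ _ _ _).const_mul (c i))
  have hgL1 : ∫ t, |b t - h t| ≤ ξ :=
    (integral_abs_le_sqrt_integral_sq_div hρ_pos hρ hρ_one hg.aestronglyMeasurable hg2).trans hgξ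
  have hc : ∑ i, |c i| ≤ l2Rho d ρ b + ξ :=
    (sum_abs_le_integral_abs_add_integral_abs_sub hρ hdisj hz_int (fun i => (hz_pos i).ne')
      hb).trans (add_le_add (integral_abs_le_sqrt_integral_sq_div hρ_pos hρ hρ_one
        hb_meas.aestronglyMeasurable hb_l2) hgL1)
  have hcN : ∑ i, |c i| ≤ √(N * Uρ) * (l2Rho d ρ b + ξ) := by
    rcases N.eq_zero_or_pos with rfl | hN
    · simp
    · exact hc.trans (le_mul_of_one_le_left (add_nonneg (Real.sqrt_nonneg _) hξ.le)
        (Real.one_le_sqrt.mpr (one_le_mul_of_one_le_of_one_le (by exact_mod_cast hN) hUρ)))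
  refine ⟨c, fun s hs => ?_⟩
  have hK : ((L * ‖consOne s‖₊ : NNReal) : ℝ) ≤ L * (D + 1) := by
    rw [NNReal.coe_mul, coe_nnnorm, norm_consOne]
    exact mul_le_mul_of_nonneg_left (hD s hs) L.coe_nonneg
  rw [add_sub_add_left_eq_sub]
  calc _ ≤ ξ + (∑ i, |c i|) * ((L * ‖consOne s‖₊ : NNReal) * α) :=
        (abs_integral_mul_sub_sum_mul_le hρ_nonneg hρ hz_int hz_pos hb (lipschitzWith_phi hLip s)
          fun t => hphibar_bdd _).trans (add_le_add hgL1 le_rfl)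
    _ ≤ √Uρ * ξ + √(N * Uρ) * (l2Rho d ρ b + ξ) * (L * (D + 1) * α) :=
        add_le_add (le_mul_of_one_le_left hξ.le (Real.one_le_sqrt.mpr hUρ))
          (mul_le_mul hcN (mul_le_mul_of_nonneg_right hK hα0.le) (by positivity)
            (mul_nonneg (Real.sqrt_nonneg _) (add_nonneg (Real.sqrt_nonneg _) hξ.le)))
    _ = _ := by ring

/-- If `b` lies in the `‖·‖_{2,ρ}`-closure of the span of the bumps
`φ_{1,α},…,φ_{N,α}`, then for every `ξ > 0` and every intercept `b₀` there are coefficients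
`β₁,…,β_N` such that the finite combination `b₀ + Σᵢ βᵢ φ(s;θᵢ)` uniformly approximates
`b₀ + ∫ b φ(s;·)` up to `√U_ρ ξ + α √(N U_ρ) L (D+1)(‖b‖_{2,ρ} + ξ)`. -/
theorem stmt_10
    {d : ℕ} (Sset : Set (EuclideanSpace ℝ (Fin d)))
    (D : ℝ) (hD : ∀ s ∈ Sset, Real.sqrt (1 + ‖s‖ ^ 2) ≤ D + 1)
    (L : NNReal) (phibar : ℝ → ℝ) (hLip : LipschitzWith L phibar)
    (hphibar_bdd : ∀ x, |phibar x| ≤ 1)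
    (ρ : EuclideanSpace ℝ (Fin (d + 1)) → ℝ) (hρ_meas : Measurable ρ)
    (hρ_pos : ∀ θ, 0 < ρ θ) (hρ_prob : IsProbabilityMeasure (muRho d ρ))
    (Uρ : ℝ) (hUρ : 1 ≤ Uρ) (hρ_le : ∀ θ, ρ θ ≤ Uρ)
    (N : ℕ) (θ : Fin N → EuclideanSpace ℝ (Fin (d + 1))) (hθ : Function.Injective θ)
    (α : ℝ) (hα0 : 0 < α) (hα : ∀ i j, i ≠ j → α < dist (θ i) (θ j))
    (hdisj : Pairwise fun i j =>
      Disjoint (Metric.closedBall (θ i) α) (Metric.closedBall (θ j) α))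
    (z : Fin N → ℝ)
    (hz : ∀ i, z i = (muRho d ρ (Metric.closedBall (θ i) α)).toReal)
    (hz_pos : ∀ i, 0 < z i)
    (b : EuclideanSpace ℝ (Fin (d + 1)) → ℝ) (hb_meas : Measurable b)
    (hb_l2 : Integrable (fun t => (b t) ^ 2 / ρ t))
    (hb_closure : ∀ ξ : ℝ, 0 < ξ → ∃ cvec : Fin N → ℝ,
      Integrable (fun t => (b t - ∑ i : Fin N, cvec i * stump d ρ (θ i) α (z i) t) ^ 2 / ρ t) ∧
      l2Rho d ρ (fun t => b t - ∑ i : Fin N, cvec i * stump d ρ (θ i) α (z i) t) ≤ ξ) :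
    ∀ ξ : ℝ, 0 < ξ → ∀ b₀ : ℝ, ∃ β : Fin N → ℝ, ∀ s ∈ Sset,
      |(b₀ + ∫ t, b t * phi d phibar t s)
          - (b₀ + ∑ i : Fin N, β i * phi d phibar (θ i) s)|
        ≤ Real.sqrt Uρ * ξ
          + α * Real.sqrt ((N : ℝ) * Uρ) * (L : ℝ) * (D + 1) * (l2Rho d ρ b + ξ) :=
  stmt_10_general Sset D hD L phibar hLip hphibar_bdd ρ hρ_meas hρ_pos hρ_prob Uρ hUρ N θ α hα0
    hdisj z hz hz_pos b hb_meas hb_l2 hb_closure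
end

section
/- Let θ₁,…,θ_N ∈ Θ be distinct, α ∈ (0, min_{i≠j} ‖θ_i − θ_j‖₂) (so the closed balls B(θ_i,α) are pairwise disjoint), real numbers β₁,…,β_N, and suppose 0 < z_i := μ_ρ(B(θ_i,α)) ≤ U_ρ for each i. Define b_α(θ) := Σ_{i=1}^N (β_i/z_i) ρ(θ) 1{‖θ − θ_i‖₂ ≤ α}. If b : Θ → ℝ satisfies ‖b − b_α‖_{2,ρ} ≤ ξ for some ξ > 0, then Σ_{i=1}^N |β_i| ≤ √(N U_ρ) · ( ‖b‖_{2,ρ} + ξ ). -/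
/-!
On the disjoint balls `b_α` is a multiple of `ρ`, so `‖b_α‖²_{2,ρ} = Σ βᵢ² / zᵢ`, and the
triangle inequality in the weighted `L²` space gives `‖b_α‖_{2,ρ} ≤ ‖b‖_{2,ρ} + ξ`.
Cauchy–Schwarz with weights `zᵢ` then bounds `(Σ |βᵢ|)² ≤ (Σ zᵢ) (Σ βᵢ² / zᵢ) ≤ N U_ρ ‖b_α‖²_{2,ρ}`.
-/

open MeasureTheory ProbabilityTheory

open Finset Function

theorem Finset.sum_abs_le_sqrt_card_mul_sqrt_sum_sq_div {ι : Type*} (s : Finset ι)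
    (β : ι → ℝ) {z : ι → ℝ} {U : ℝ} (hz : ∀ i ∈ s, 0 < z i) (hzU : ∀ i ∈ s, z i ≤ U) :
    ∑ i ∈ s, |β i| ≤ √(#s * U) * √(∑ i ∈ s, β i ^ 2 / z i) := by
  have hnonneg : 0 ≤ ∑ i ∈ s, β i ^ 2 / z i :=
    sum_nonneg fun i hi => div_nonneg (sq_nonneg _) (hz i hi).le
  have hcs : (∑ i ∈ s, |β i|) ^ 2 ≤ (∑ i ∈ s, z i) * ∑ i ∈ s, β i ^ 2 / z i :=
    sum_sq_le_sum_mul_sum_of_sq_le_mul s (fun i hi => (hz i hi).le)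
      (fun i hi => div_nonneg (sq_nonneg _) (hz i hi).le)
      (fun i hi => by rw [sq_abs, mul_div_cancel₀ _ (hz i hi).ne'])
  have hsum : ∑ i ∈ s, z i ≤ #s * U := by
    simpa using sum_le_card_nsmul s z U hzU
  rw [← Real.sqrt_mul' _ hnonneg]
  exact (le_abs_self _).trans
    (Real.abs_le_sqrt (hcs.trans (mul_le_mul_of_nonneg_right hsum hnonneg)))

section WeightedL2

variable {X : Type*} [MeasurableSpace X] {μ : Measure X} {ρ : X → ℝ}

theorem sqrt_integral_sq_div_eq_lpNorm (hρ : ∀ x, 0 ≤ ρ x) {f : X → ℝ}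
    (hf : AEStronglyMeasurable (fun x => f x / √(ρ x)) μ) :
    √(∫ x, f x ^ 2 / ρ x ∂μ) = lpNorm (fun x => f x / √(ρ x)) 2 μ := by
  rw [lpNorm_eq_integral_norm_rpow_toReal two_ne_zero ENNReal.ofNat_ne_top hf,
    Real.sqrt_eq_rpow]
  simp [div_pow, Real.sq_sqrt (hρ _)]

theorem sqrt_integral_sq_div_le_add (hρm : AEMeasurable ρ μ) (hρ : ∀ x, 0 ≤ ρ x) {f g : X → ℝ}
    (hf : AEMeasurable f μ) (hg : AEMeasurable g μ)
    (hg2 : Integrable (fun x => g x ^ 2 / ρ x) μ) :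
    √(∫ x, f x ^ 2 / ρ x ∂μ) ≤
      √(∫ x, g x ^ 2 / ρ x ∂μ) + √(∫ x, (g x - f x) ^ 2 / ρ x ∂μ) := by
  have hgL : MemLp (fun x => g x / √(ρ x)) 2 μ := by
    refine (memLp_two_iff_integrable_sq (hg.div hρm.sqrt).aestronglyMeasurable).2 ?_
    simpa [div_pow, Real.sq_sqrt (hρ _)] using hg2
  rw [sqrt_integral_sq_div_eq_lpNorm hρ (hf.div hρm.sqrt).aestronglyMeasurable,
    sqrt_integral_sq_div_eq_lpNorm hρ (hg.div hρm.sqrt).aestronglyMeasurable,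
    sqrt_integral_sq_div_eq_lpNorm (f := fun x => g x - f x) hρ
      ((hg.sub hf).div hρm.sqrt).aestronglyMeasurable]
  convert lpNorm_le_lpNorm_add_lpNorm_sub hgL one_le_two using 3
  ext x
  exact sub_div _ _ _

end WeightedL2

section DisjointSupports

variable {X ι : Type*} [Fintype ι] {s : ι → Set X}

theorem sq_sum_mul_indicator_div (hs : Pairwise (Disjoint on s)) (c : ι → ℝ) (ρ : X → ℝ)
    (x : X) :
    (∑ i, c i * (s i).indicator ρ x) ^ 2 / ρ x = ∑ i, c i ^ 2 * (s i).indicator ρ x := by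
  by_cases hx : ∃ i, x ∈ s i
  · obtain ⟨i, hi⟩ := hx
    have hj : ∀ j ≠ i, (s j).indicator ρ x = 0 := fun j hji =>
      Set.indicator_of_notMem (Set.disjoint_right.1 (hs hji) hi) ρ
    rw [Finset.sum_eq_single_of_mem i (Finset.mem_univ i) fun j _ hji => by rw [hj j hji, mul_zero],
      Finset.sum_eq_single_of_mem i (Finset.mem_univ i) fun j _ hji => by rw [hj j hji, mul_zero],
      Set.indicator_of_mem hi, mul_pow, sq (ρ x), mul_div_assoc, mul_self_div_self]
  · push Not at hx
    simp [Set.indicator_of_notMem (hx _)]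

theorem integral_sq_sum_mul_indicator_div [MeasurableSpace X] {μ : Measure X} {ρ : X → ℝ}
    (hs : Pairwise (Disjoint on s)) (hsm : ∀ i, MeasurableSet (s i))
    (hρ : ∀ i, IntegrableOn ρ (s i) μ) (c : ι → ℝ) :
    ∫ x, (∑ i, c i * (s i).indicator ρ x) ^ 2 / ρ x ∂μ = ∑ i, c i ^ 2 * ∫ x in s i, ρ x ∂μ := by
  simp_rw [sq_sum_mul_indicator_div hs c ρ]
  rw [integral_finsetSum _ fun i _ => ((integrable_indicator_iff (hsm i)).2 (hρ i)).const_mul _]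
  simp_rw [integral_const_mul, integral_indicator (hsm _)]

end DisjointSupports

theorem MeasureTheory.Measure.toReal_withDensity_ofReal_apply {X : Type*} [MeasurableSpace X]
    {μ : Measure X} {ρ : X → ℝ} (hρm : AEStronglyMeasurable ρ μ) (hρ : ∀ x, 0 ≤ ρ x)
    {s : Set X} (hs : MeasurableSet s) :
    (μ.withDensity (fun x => ENNReal.ofReal (ρ x)) s).toReal = ∫ x in s, ρ x ∂μ := by
  rw [withDensity_apply _ hs,
    integral_eq_lintegral_of_nonneg_ae (.of_forall hρ) hρm.restrict]

theorem stmt_14_general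
    {d : ℕ}
    (ρ : EuclideanSpace ℝ (Fin (d + 1)) → ℝ) (hρ_meas : Measurable ρ)
    (hρ_pos : ∀ θ, 0 < ρ θ)
    (Uρ : ℝ)
    (N : ℕ) (θ : Fin N → EuclideanSpace ℝ (Fin (d + 1)))
    (α : ℝ)
    (hdisj : Pairwise fun i j =>
      Disjoint (Metric.closedBall (θ i) α) (Metric.closedBall (θ j) α))
    (β : Fin N → ℝ)
    (z : Fin N → ℝ)
    (hz : ∀ i, z i = (muRho d ρ (Metric.closedBall (θ i) α)).toReal)
    (hz_pos : ∀ i, 0 < z i) (hz_le : ∀ i, z i ≤ Uρ)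
    (bα : EuclideanSpace ℝ (Fin (d + 1)) → ℝ)
    (hbα : ∀ t, bα t = ∑ i : Fin N, (β i / z i) * ρ t * (if dist t (θ i) ≤ α then 1 else 0))
    (b : EuclideanSpace ℝ (Fin (d + 1)) → ℝ) (hb_meas : Measurable b)
    (hb_l2 : Integrable (fun t => (b t) ^ 2 / ρ t))
    (ξ : ℝ)
    (hclose : l2Rho d ρ (fun t => b t - bα t) ≤ ξ) :
    ∑ i : Fin N, |β i| ≤ Real.sqrt ((N : ℝ) * Uρ) * (l2Rho d ρ b + ξ) := by
  set s := fun i => Metric.closedBall (θ i) α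
  have hρ0 : ∀ t, 0 ≤ ρ t := fun t => (hρ_pos t).le
  have hbα_eq : bα = fun t => ∑ i, β i / z i * (s i).indicator ρ t := by
    ext t
    rw [hbα]
    refine Finset.sum_congr rfl fun i _ => ?_
    by_cases ht : dist t (θ i) ≤ α <;> simp [s, ht, Metric.mem_closedBall]
  have hz_int : ∀ i, ∫ t in s i, ρ t = z i := fun i => by
    rw [hz, muRho, Measure.toReal_withDensity_ofReal_apply hρ_meas.aestronglyMeasurable hρ0
      measurableSet_closedBall]
  -- A non-integrable `ρ` would have junk integral `0` on the ball, contradicting `0 < z i`.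
  have hρ_int : ∀ i, IntegrableOn ρ (s i) :=
    fun i => Integrable.of_integral_ne_zero ((hz_int i).symm ▸ (hz_pos i).ne')
  have hbα_norm : l2Rho d ρ bα = √(∑ i, β i ^ 2 / z i) := by
    rw [l2Rho, hbα_eq, integral_sq_sum_mul_indicator_div hdisj
      (fun _ => measurableSet_closedBall) hρ_int]
    congr 1
    refine Finset.sum_congr rfl fun i _ => ?_
    rw [hz_int, div_pow, sq (z i), div_mul_eq_mul_div, mul_div_mul_right _ _ (hz_pos i).ne']
  have hbα_meas : Measurable bα := by
    rw [hbα_eq]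
    exact Finset.measurable_sum _ fun i _ =>
      measurable_const.mul (hρ_meas.indicator measurableSet_closedBall)
  have htri : l2Rho d ρ bα ≤ l2Rho d ρ b + l2Rho d ρ (fun t => b t - bα t) :=
    sqrt_integral_sq_div_le_add hρ_meas.aemeasurable hρ0 hbα_meas.aemeasurable
      hb_meas.aemeasurable hb_l2
  calc ∑ i, |β i| ≤ √(N * Uρ) * √(∑ i, β i ^ 2 / z i) := by
        simpa using Finset.univ.sum_abs_le_sqrt_card_mul_sqrt_sum_sq_div β
          (fun i _ => hz_pos i) (fun i _ => hz_le i)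
    _ ≤ √(N * Uρ) * (l2Rho d ρ b + ξ) := by
        rw [← hbα_norm]
        gcongr
        linarith

/-- If `b_α(θ) = Σᵢ (βᵢ/zᵢ) ρ(θ) 1{‖θ−θᵢ‖ ≤ α}` is built on pairwise
disjoint balls with `0 < zᵢ ≤ U_ρ`, and `‖b − b_α‖_{2,ρ} ≤ ξ`, then
`Σᵢ |βᵢ| ≤ √(N U_ρ) (‖b‖_{2,ρ} + ξ)`. -/
theorem stmt_14
    {d : ℕ}
    (ρ : EuclideanSpace ℝ (Fin (d + 1)) → ℝ) (hρ_meas : Measurable ρ)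
    (hρ_pos : ∀ θ, 0 < ρ θ) (hρ_prob : IsProbabilityMeasure (muRho d ρ))
    (Uρ : ℝ)
    (N : ℕ) (θ : Fin N → EuclideanSpace ℝ (Fin (d + 1))) (hθ : Function.Injective θ)
    (α : ℝ) (hα0 : 0 < α) (hα : ∀ i j, i ≠ j → α < dist (θ i) (θ j))
    (hdisj : Pairwise fun i j =>
      Disjoint (Metric.closedBall (θ i) α) (Metric.closedBall (θ j) α))
    (β : Fin N → ℝ)
    (z : Fin N → ℝ)
    (hz : ∀ i, z i = (muRho d ρ (Metric.closedBall (θ i) α)).toReal)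
    (hz_pos : ∀ i, 0 < z i) (hz_le : ∀ i, z i ≤ Uρ)
    (bα : EuclideanSpace ℝ (Fin (d + 1)) → ℝ)
    (hbα : ∀ t, bα t = ∑ i : Fin N, (β i / z i) * ρ t * (if dist t (θ i) ≤ α then 1 else 0))
    (b : EuclideanSpace ℝ (Fin (d + 1)) → ℝ) (hb_meas : Measurable b)
    (hb_l2 : Integrable (fun t => (b t) ^ 2 / ρ t))
    (hdiff_l2 : Integrable (fun t => (b t - bα t) ^ 2 / ρ t))
    (ξ : ℝ) (hξ : 0 < ξ)
    (hclose : l2Rho d ρ (fun t => b t - bα t) ≤ ξ) :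
    ∑ i : Fin N, |β i| ≤ Real.sqrt ((N : ℝ) * Uρ) * (l2Rho d ρ b + ξ) :=
  stmt_14_general ρ hρ_meas hρ_pos Uρ N θ α hdisj β z hz hz_pos hz_le bα hbα b hb_meas hb_l2 ξ
    hclose
end

section
/- Suppose (η^S, u^S) is feasible to the average-cost LP with slack ζ := inf_{s ∈ S, a ∈ A_s} { c(s,a) − η^S T(s,a) − u^S(s) + u^S(f(s,a)) } > 0, and (η, u) is ε-feasible for some ε > 0. Set R := ε/(ζ + ε) and define the convex combination (η̂, û) := ( R η^S + (1−R) η, R u^S + (1−R) u ). Then (η̂, û) is feasible to the average-cost LP, and |η − η̂| ≤ (ε/(ζ+ε)) |η − η^S| and sup_{s∈S} |u(s) − û(s)| ≤ (ε/(ζ+ε)) sup_{s∈S} |u(s) − u^S(s)|. -/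
/-- Given a strictly feasible (Slater) solution `(η^S, u^S)` of the
average-cost LP with slack `ζ > 0` and an `ε`-feasible solution `(η, u)`, the convex
combination `(η̂, û)` with weight `R = ε/(ζ+ε)` on the Slater point is feasible, and
`|η − η̂| ≤ (ε/(ζ+ε))|η − η^S|` and `sup_s |u s − û s| ≤ (ε/(ζ+ε)) sup_s |u s − u^S s|`. -/
theorem stmt_15
    {S A : Type*} [Nonempty S]
    (Act : S → Set A) (hAct : ∀ s, (Act s).Nonempty)
    (c : S → A → ℝ) (T : S → A → ℝ) (hT : ∀ s, ∀ a ∈ Act s, 0 < T s a)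
    (f : S → A → S)
    (ηS : ℝ) (uS : S → ℝ) (huS_bdd : ∃ M, ∀ s, |uS s| ≤ M)
    (hS_feas : ∀ s : S, ∀ a ∈ Act s, ηS * T s a + uS s - uS (f s a) ≤ c s a)
    (ζ : ℝ)
    (hζ : ζ = sInf {x : ℝ | ∃ s : S, ∃ a ∈ Act s,
      x = c s a - ηS * T s a - uS s + uS (f s a)})
    (hζ_pos : 0 < ζ)
    (ε : ℝ) (hε : 0 < ε)
    (η : ℝ) (u : S → ℝ) (hu_bdd : ∃ M, ∀ s, |u s| ≤ M)
    (hεfeas : ∀ s : S, ∀ a ∈ Act s, η * T s a + u s - u (f s a) ≤ c s a + ε)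
    (R : ℝ) (hR : R = ε / (ζ + ε))
    (ηhat : ℝ) (hηhat : ηhat = R * ηS + (1 - R) * η)
    (uhat : S → ℝ) (huhat : ∀ s, uhat s = R * uS s + (1 - R) * u s) :
    (∀ s : S, ∀ a ∈ Act s, ηhat * T s a + uhat s - uhat (f s a) ≤ c s a) ∧
      |η - ηhat| ≤ ε / (ζ + ε) * |η - ηS| ∧
      ∀ s : S, |u s - uhat s| ≤ ε / (ζ + ε) * ⨆ s' : S, |u s' - uS s'| := by
  have hζε : 0 < ζ + ε := by linarith
  have hR0 : 0 ≤ R := by rw [hR]; positivity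
  have hR1 : R ≤ 1 := by rw [hR, div_le_one hζε]; linarith
  have hkey : R * ζ - (1 - R) * ε = 0 := by
    rw [hR]; field_simp; ring
  refine ⟨?_, ?_, ?_⟩
  · intro s a ha
    have hz : ζ ≤ c s a - ηS * T s a - uS s + uS (f s a) := by
      rw [hζ]
      apply csInf_le
      · refine ⟨0, ?_⟩
        rintro x ⟨s', a', ha', rfl⟩
        have := hS_feas s' a' ha'
        linarith
      · exact ⟨s, a, ha, rfl⟩
    have e1 : R * (ηS * T s a + uS s - uS (f s a)) ≤ R * (c s a - ζ) :=
      mul_le_mul_of_nonneg_left (by linarith) hR0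
    have e2 : (1 - R) * (η * T s a + u s - u (f s a)) ≤ (1 - R) * (c s a + ε) :=
      mul_le_mul_of_nonneg_left (hεfeas s a ha) (by linarith)
    rw [hηhat, huhat s, huhat (f s a)]
    nlinarith [e1, e2, hkey]
  · have heq : η - ηhat = R * (η - ηS) := by rw [hηhat]; ring
    rw [heq, abs_mul, abs_of_nonneg hR0, hR]
  · intro s
    obtain ⟨M, hM⟩ := hu_bdd
    obtain ⟨M', hM'⟩ := huS_bdd
    have hbdd : BddAbove (Set.range fun s' : S => |u s' - uS s'|) := by
      refine ⟨M + M', ?_⟩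
      rintro x ⟨s', rfl⟩
      calc |u s' - uS s'| ≤ |u s'| + |uS s'| := abs_sub _ _
        _ ≤ M + M' := add_le_add (hM s') (hM' s')
    have hle : |u s - uS s| ≤ ⨆ s' : S, |u s' - uS s'| :=
      le_ciSup hbdd s
    have heq : u s - uhat s = R * (u s - uS s) := by rw [huhat]; ring
    rw [heq, abs_mul, abs_of_nonneg hR0, hR]
    exact mul_le_mul_of_nonneg_left hle (by positivity)
end

section
/- Suppose (η^{AC}, u^{AC}) is feasible to the average-cost LP, (η^S, u^S) is feasible with slack ζ := inf_{s ∈ S, a ∈ A_s} { c(s,a) − η^S T(s,a) − u^S(s) + u^S(f(s,a)) } > 0, and û : S → ℝ is bounded with sup_{s∈S} |u^{AC}(s) − û(s)| ≤ ε for some ε > 0. Then (η^{AC}, û) is 2ε-feasible, and there exists a feasible pair (η̂, ũ) such that |η^{AC} − η̂| ≤ (2ε/(ζ+2ε)) |η^{AC} − η^S| and sup_{s∈S} |u^{AC}(s) − ũ(s)| ≤ ε + (2ε/(ζ+2ε)) ( ε + sup_{s∈S} |u^{AC}(s) − u^S(s)| ). -/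
/-!
The LP constraints are affine in `(η, u)`, so a convex combination of a `2ε`-feasible pair with
a Slater point of slack `ζ` has slack at least `(1 - θ) (-2ε) + θ ζ`. The weight
`θ = 2ε / (ζ + 2ε)` is the smallest one making this nonnegative, and moving the exactly
feasible `(η^{AC}, u^{AC})` first to `(η^{AC}, û)` and then a `θ`-fraction towards the Slater
point costs at most `ε` and `θ (ε + sup |u^{AC} - u^S|)` in the sup norm.
-/

theorem abs_sub_convex_comb_le {x y z θ : ℝ} (hθ₀ : 0 ≤ θ) (hθ₁ : θ ≤ 1) :
    |x - ((1 - θ) * y + θ * z)| ≤ (1 - θ) * |x - y| + θ * |x - z| :=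
  calc |x - ((1 - θ) * y + θ * z)| = |(1 - θ) * (x - y) + θ * (x - z)| := by ring_nf
    _ ≤ |(1 - θ) * (x - y)| + |θ * (x - z)| := abs_add_le _ _
    _ = (1 - θ) * |x - y| + θ * |x - z| := by
      rw [abs_mul, abs_mul, abs_of_nonneg (sub_nonneg.2 hθ₁), abs_of_nonneg hθ₀]

theorem div_add_self_balance {δ ζ : ℝ} (hζ : 0 < ζ) (hδ : 0 ≤ δ) :
    0 ≤ δ / (ζ + δ) ∧ δ / (ζ + δ) ≤ 1 ∧ (1 - δ / (ζ + δ)) * δ = δ / (ζ + δ) * ζ := by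
  have hden : 0 < ζ + δ := by linarith
  refine ⟨by positivity, (div_le_one hden).2 (by linarith), ?_⟩
  field_simp
  ring

section Bounded

variable {S : Type*} {u v : S → ℝ}

theorem exists_abs_le_mul_add_mul (hu : ∃ M, ∀ s, |u s| ≤ M) (hv : ∃ M, ∀ s, |v s| ≤ M)
    (a b : ℝ) : ∃ M, ∀ s, |a * u s + b * v s| ≤ M := by
  obtain ⟨M, hM⟩ := hu
  obtain ⟨N, hN⟩ := hv
  refine ⟨|a| * M + |b| * N, fun s => ?_⟩
  calc |a * u s + b * v s| ≤ |a * u s| + |b * v s| := abs_add_le _ _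
    _ = |a| * |u s| + |b| * |v s| := by rw [abs_mul, abs_mul]
    _ ≤ |a| * M + |b| * N := by gcongr; exacts [hM s, hN s]

theorem abs_sub_le_iSup_abs_sub (hu : ∃ M, ∀ s, |u s| ≤ M) (hv : ∃ M, ∀ s, |v s| ≤ M)
    (s : S) : |u s - v s| ≤ ⨆ s', |u s' - v s'| := by
  obtain ⟨M, hM⟩ := hu
  obtain ⟨N, hN⟩ := hv
  refine le_ciSup (f := fun s' => |u s' - v s'|) ⟨M + N, ?_⟩ s
  rintro _ ⟨s', rfl⟩
  exact (abs_sub _ _).trans (add_le_add (hM s') (hN s'))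

end Bounded

section AverageCostLP

variable {S A : Type*} {Act : S → Set A} {c T : S → A → ℝ} {f : S → A → S}

theorem sInf_slack_le {η : ℝ} {u : S → ℝ}
    (hfeas : ∀ s, ∀ a ∈ Act s, η * T s a + u s - u (f s a) ≤ c s a) {s : S} {a : A}
    (ha : a ∈ Act s) :
    sInf {x : ℝ | ∃ s : S, ∃ a ∈ Act s, x = c s a - η * T s a - u s + u (f s a)}
      ≤ c s a - η * T s a - u s + u (f s a) := by
  refine csInf_le ⟨0, ?_⟩ ⟨s, a, ha, rfl⟩
  rintro _ ⟨s', a', ha', rfl⟩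
  linarith [hfeas s' a' ha']

theorem feasible_add_two_mul_of_abs_sub_le {η ε : ℝ} {u v : S → ℝ}
    (hu : ∀ s, ∀ a ∈ Act s, η * T s a + u s - u (f s a) ≤ c s a) (huv : ∀ s, |u s - v s| ≤ ε) :
    ∀ s, ∀ a ∈ Act s, η * T s a + v s - v (f s a) ≤ c s a + 2 * ε := by
  intro s a ha
  linarith [hu s a ha, (abs_le.1 (huv s)).1, (abs_le.1 (huv (f s a))).2]

theorem feasible_convex_comb {η₁ η₂ δ ζ θ : ℝ} {u₁ u₂ : S → ℝ}
    (h₁ : ∀ s, ∀ a ∈ Act s, η₁ * T s a + u₁ s - u₁ (f s a) ≤ c s a + δ)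
    (h₂ : ∀ s, ∀ a ∈ Act s, ζ ≤ c s a - η₂ * T s a - u₂ s + u₂ (f s a))
    (hθ₀ : 0 ≤ θ) (hθ₁ : θ ≤ 1) (hθ : (1 - θ) * δ ≤ θ * ζ) :
    ∀ s, ∀ a ∈ Act s, ((1 - θ) * η₁ + θ * η₂) * T s a + ((1 - θ) * u₁ s + θ * u₂ s)
      - ((1 - θ) * u₁ (f s a) + θ * u₂ (f s a)) ≤ c s a := by
  intro s a ha
  linarith [mul_le_mul_of_nonneg_left (h₁ s a ha) (sub_nonneg.2 hθ₁),
    mul_le_mul_of_nonneg_left (h₂ s a ha) hθ₀]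

end AverageCostLP

theorem stmt_16_general
    {S A : Type*}
    (Act : S → Set A)
    (c : S → A → ℝ) (T : S → A → ℝ)
    (f : S → A → S)
    (ηAC : ℝ) (uAC : S → ℝ) (huAC_bdd : ∃ M, ∀ s, |uAC s| ≤ M)
    (hAC_feas : ∀ s : S, ∀ a ∈ Act s, ηAC * T s a + uAC s - uAC (f s a) ≤ c s a)
    (ηS : ℝ) (uS : S → ℝ) (huS_bdd : ∃ M, ∀ s, |uS s| ≤ M)
    (hS_feas : ∀ s : S, ∀ a ∈ Act s, ηS * T s a + uS s - uS (f s a) ≤ c s a)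
    (ζ : ℝ)
    (hζ : ζ = sInf {x : ℝ | ∃ s : S, ∃ a ∈ Act s,
      x = c s a - ηS * T s a - uS s + uS (f s a)})
    (hζ_pos : 0 < ζ)
    (ε : ℝ) (hε : 0 < ε)
    (uhat : S → ℝ) (huhat_bdd : ∃ M, ∀ s, |uhat s| ≤ M)
    (hclose : ∀ s : S, |uAC s - uhat s| ≤ ε) :
    (∀ s : S, ∀ a ∈ Act s, ηAC * T s a + uhat s - uhat (f s a) ≤ c s a + 2 * ε) ∧
      ∃ (ηtil : ℝ) (util : S → ℝ), (∃ M, ∀ s, |util s| ≤ M) ∧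
        (∀ s : S, ∀ a ∈ Act s, ηtil * T s a + util s - util (f s a) ≤ c s a) ∧
        |ηAC - ηtil| ≤ 2 * ε / (ζ + 2 * ε) * |ηAC - ηS| ∧
        ∀ s : S, |uAC s - util s|
          ≤ ε + 2 * ε / (ζ + 2 * ε) * (ε + ⨆ s' : S, |uAC s' - uS s'|) := by
  set θ := 2 * ε / (ζ + 2 * ε)
  obtain ⟨hθ₀, hθ₁, hθ⟩ := div_add_self_balance hζ_pos (by positivity : 0 ≤ 2 * ε)
  have hhat := feasible_add_two_mul_of_abs_sub_le hAC_feas hclose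
  have hslack : ∀ s, ∀ a ∈ Act s, ζ ≤ c s a - ηS * T s a - uS s + uS (f s a) :=
    fun s a ha => hζ ▸ sInf_slack_le hS_feas ha
  refine ⟨hhat, (1 - θ) * ηAC + θ * ηS, fun s => (1 - θ) * uhat s + θ * uS s,
    exists_abs_le_mul_add_mul huhat_bdd huS_bdd _ _,
    feasible_convex_comb hhat hslack hθ₀ hθ₁ hθ.le, ?_, fun s => ?_⟩
  · simpa using abs_sub_convex_comb_le (x := ηAC) (y := ηAC) (z := ηS) hθ₀ hθ₁
  · have hsup := abs_sub_le_iSup_abs_sub huAC_bdd huS_bdd s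
    have hθε : 0 ≤ θ * ε := by positivity
    calc |uAC s - ((1 - θ) * uhat s + θ * uS s)|
        ≤ (1 - θ) * |uAC s - uhat s| + θ * |uAC s - uS s| := abs_sub_convex_comb_le hθ₀ hθ₁
      _ ≤ (1 - θ) * ε + θ * ⨆ s', |uAC s' - uS s'| :=
        add_le_add (mul_le_mul_of_nonneg_left (hclose s) (sub_nonneg.2 hθ₁))
          (mul_le_mul_of_nonneg_left hsup hθ₀)
      _ ≤ ε + θ * (ε + ⨆ s', |uAC s' - uS s'|) := by linarith

/-- If `(η^{AC}, u^{AC})` is feasible to the average-cost LP, `(η^S, u^S)`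
is a Slater point with slack `ζ > 0`, and `û` is bounded with `sup_s |u^{AC} s − û s| ≤ ε`,
then `(η^{AC}, û)` is `2ε`-feasible, and there is a feasible pair `(η̂, ũ)` with
`|η^{AC} − η̂| ≤ (2ε/(ζ+2ε))|η^{AC} − η^S|` and
`sup_s |u^{AC} s − ũ s| ≤ ε + (2ε/(ζ+2ε))(ε + sup_s |u^{AC} s − u^S s|)`. -/
theorem stmt_16
    {S A : Type*} [Nonempty S]
    (Act : S → Set A) (hAct : ∀ s, (Act s).Nonempty)
    (c : S → A → ℝ) (T : S → A → ℝ) (hT : ∀ s, ∀ a ∈ Act s, 0 < T s a)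
    (f : S → A → S)
    (ηAC : ℝ) (uAC : S → ℝ) (huAC_bdd : ∃ M, ∀ s, |uAC s| ≤ M)
    (hAC_feas : ∀ s : S, ∀ a ∈ Act s, ηAC * T s a + uAC s - uAC (f s a) ≤ c s a)
    (ηS : ℝ) (uS : S → ℝ) (huS_bdd : ∃ M, ∀ s, |uS s| ≤ M)
    (hS_feas : ∀ s : S, ∀ a ∈ Act s, ηS * T s a + uS s - uS (f s a) ≤ c s a)
    (ζ : ℝ)
    (hζ : ζ = sInf {x : ℝ | ∃ s : S, ∃ a ∈ Act s,
      x = c s a - ηS * T s a - uS s + uS (f s a)})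
    (hζ_pos : 0 < ζ)
    (ε : ℝ) (hε : 0 < ε)
    (uhat : S → ℝ) (huhat_bdd : ∃ M, ∀ s, |uhat s| ≤ M)
    (hclose : ∀ s : S, |uAC s - uhat s| ≤ ε) :
    (∀ s : S, ∀ a ∈ Act s, ηAC * T s a + uhat s - uhat (f s a) ≤ c s a + 2 * ε) ∧
      ∃ (ηtil : ℝ) (util : S → ℝ), (∃ M, ∀ s, |util s| ≤ M) ∧
        (∀ s : S, ∀ a ∈ Act s, ηtil * T s a + util s - util (f s a) ≤ c s a) ∧
        |ηAC - ηtil| ≤ 2 * ε / (ζ + 2 * ε) * |ηAC - ηS| ∧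
        ∀ s : S, |uAC s - util s|
          ≤ ε + 2 * ε / (ζ + 2 * ε) * (ε + ⨆ s' : S, |uAC s' - uS s'|) :=
  stmt_16_general Act c T f ηAC uAC huAC_bdd hAC_feas ηS uS huS_bdd hS_feas ζ hζ hζ_pos ε hε uhat
    huhat_bdd hclose
end

section
/- Let ν be a probability measure on S and ε > 0. Suppose: (a) V^{FE} is bounded measurable, satisfies the ALP (Bellman) constraints, and ∫_S |V* − V^{FE}| dν ≤ 2ε/(1−γ); (b) W is bounded measurable, satisfies the ALP constraints, and sup_{s∈S} |V^{FE}(s) − W(s)| ≤ 2ε/(1−γ); and (c) V' is bounded measurable, satisfies the ALP constraints, and ∫_S V' dν ≥ ∫_S W dν. Then ∫_S |V* − V'| dν ≤ 4ε/(1−γ). -/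
/-!
Every feasible point `V` of the ALP satisfies `V ≤ V*`: if `D = sup (V - V*)`, the constraints
and the Bellman equation give `V ≤ V* + γ D`, so `D ≤ γ D` and hence `D ≤ 0`. Thus the objective
`∫ V dν` of a feasible `V` is its `L¹(ν)` distance to `V*` up to the constant `∫ V* dν`, and
`∫ |V* - V'| dν = ∫ (V* - V') dν ≤ ∫ (V* - W) dν ≤ ∫ |V* - V^{FE}| dν + ‖V^{FE} - W‖_∞`.
-/

open MeasureTheory ProbabilityTheory

lemma Measurable.integrable_of_forall_abs_le {α : Type*} [MeasurableSpace α] {μ : Measure α}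
    [IsFiniteMeasure μ] {f : α → ℝ} (hf : Measurable f) (hbdd : ∃ M, ∀ x, |f x| ≤ M) :
    Integrable f μ :=
  let ⟨M, hM⟩ := hbdd
  .of_bound hf.aestronglyMeasurable M (ae_of_all _ hM)

lemma nonpos_of_forall_le_mul_iSup {ι : Type*} {u : ι → ℝ} (hu : BddAbove (Set.range u))
    {γ : ℝ} (hγ : γ < 1) (h : ∀ i, u i ≤ γ * ⨆ j, u j) (i : ι) : u i ≤ 0 := by
  have : Nonempty ι := ⟨i⟩
  have hD : ⨆ j, u j ≤ γ * ⨆ j, u j := ciSup_le h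
  have hD0 : ⨆ j, u j ≤ 0 := by nlinarith
  exact (le_ciSup hu i).trans hD0

namespace DiscountedMDP

variable {S A : Type*} [MeasurableSpace S] [MeasurableSpace A]

def SatisfiesALP (Act : S → Set A) (c : S × A → ℝ) (γ : ℝ) (P : Kernel (S × A) S)
    (V : S → ℝ) : Prop :=
  ∀ s : S, ∀ a ∈ Act s, V s - γ * ∫ s', V s' ∂(P (s, a)) ≤ c (s, a)

def IsBellmanFixedPoint (Act : S → Set A) (c : S × A → ℝ) (γ : ℝ) (P : Kernel (S × A) S)
    (V : S → ℝ) : Prop :=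
  ∀ s : S, V s = ⨅ a : Act s, (c (s, (a : A)) + γ * ∫ s', V s' ∂(P (s, (a : A))))

variable {Act : S → Set A} {c : S × A → ℝ} {γ : ℝ} {P : Kernel (S × A) S} [IsMarkovKernel P]
  {V Vstar : S → ℝ}

lemma SatisfiesALP.le_add_mul (hV : SatisfiesALP Act c γ P V)
    (hVstar : IsBellmanFixedPoint Act c γ P Vstar) (hAct : ∀ s, (Act s).Nonempty) (hγ0 : 0 ≤ γ)
    (hV_int : ∀ x, Integrable V (P x)) (hVstar_int : ∀ x, Integrable Vstar (P x)) {D : ℝ}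
    (hD : ∀ s, V s ≤ Vstar s + D) (s : S) : V s ≤ Vstar s + γ * D := by
  have : Nonempty (Act s) := (hAct s).to_subtype
  suffices V s - γ * D ≤ ⨅ a : Act s, (c (s, (a : A)) + γ * ∫ s', Vstar s' ∂(P (s, (a : A)))) by
    rw [← hVstar s] at this
    linarith
  refine le_ciInf fun a => ?_
  have hint : ∫ s', V s' ∂(P (s, (a : A))) ≤ ∫ s', Vstar s' ∂(P (s, (a : A))) + D := by
    calc ∫ s', V s' ∂(P (s, (a : A)))
        ≤ ∫ s', (Vstar s' + D) ∂(P (s, (a : A))) :=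
          integral_mono (hV_int _) ((hVstar_int _).add (integrable_const D)) hD
      _ = ∫ s', Vstar s' ∂(P (s, (a : A))) + D := by
          rw [integral_add (hVstar_int _) (integrable_const D), integral_const, probReal_univ,
            one_smul]
  have hALP := hV s a a.2
  linarith [mul_le_mul_of_nonneg_left hint hγ0]

lemma SatisfiesALP.le_of_isBellmanFixedPoint (hV : SatisfiesALP Act c γ P V)
    (hVstar : IsBellmanFixedPoint Act c γ P Vstar) (hAct : ∀ s, (Act s).Nonempty)
    (hγ0 : 0 ≤ γ) (hγ1 : γ < 1) (hV_meas : Measurable V) (hV_bdd : ∃ M, ∀ s, |V s| ≤ M)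
    (hVstar_meas : Measurable Vstar) (hVstar_bdd : ∃ M, ∀ s, |Vstar s| ≤ M) (s : S) :
    V s ≤ Vstar s := by
  obtain ⟨M, hM⟩ := hV_bdd
  obtain ⟨Mstar, hMstar⟩ := hVstar_bdd
  have hbdd : BddAbove (Set.range fun s => V s - Vstar s) := by
    refine ⟨M + Mstar, ?_⟩
    rintro _ ⟨s, rfl⟩
    linarith [(abs_le.1 (hM s)).2, (abs_le.1 (hMstar s)).1]
  have hstep := hV.le_add_mul hVstar hAct hγ0
    (fun _ => hV_meas.integrable_of_forall_abs_le ⟨M, hM⟩)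
    (fun _ => hVstar_meas.integrable_of_forall_abs_le ⟨Mstar, hMstar⟩)
    (D := ⨆ s, (V s - Vstar s)) (fun s => by linarith [le_ciSup hbdd s])
  have := nonpos_of_forall_le_mul_iSup hbdd hγ1 (fun s => by linarith [hstep s]) s
  linarith

end DiscountedMDP

theorem stmt_17_general
    {S A : Type*} [MeasurableSpace S] [MeasurableSpace A]
    (Act : S → Set A) (hAct : ∀ s, (Act s).Nonempty)
    (c : S × A → ℝ)
    (γ : ℝ) (hγ0 : 0 ≤ γ) (hγ1 : γ < 1)
    (P : Kernel (S × A) S) [IsMarkovKernel P]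
    (Vstar : S → ℝ) (hVstar_meas : Measurable Vstar)
    (hVstar_bdd : ∃ M, ∀ s, |Vstar s| ≤ M)
    (hBellman : ∀ s : S,
      Vstar s = ⨅ a : Act s, (c (s, (a : A)) + γ * ∫ s', Vstar s' ∂(P (s, (a : A)))))
    (ν : Measure S) [IsProbabilityMeasure ν]
    (ε : ℝ)
    (VFE : S → ℝ) (hVFE_meas : Measurable VFE) (hVFE_bdd : ∃ M, ∀ s, |VFE s| ≤ M)
    (hVFE_close : ∫ s, |Vstar s - VFE s| ∂ν ≤ 2 * ε / (1 - γ))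
    (W : S → ℝ) (hW_meas : Measurable W) (hW_bdd : ∃ M, ∀ s, |W s| ≤ M)
    (hW_ALP : ∀ s : S, ∀ a ∈ Act s, W s - γ * ∫ s', W s' ∂(P (s, a)) ≤ c (s, a))
    (hW_close : ∀ s : S, |VFE s - W s| ≤ 2 * ε / (1 - γ))
    (V' : S → ℝ) (hV'_meas : Measurable V') (hV'_bdd : ∃ M, ∀ s, |V' s| ≤ M)
    (hV'_ALP : ∀ s : S, ∀ a ∈ Act s, V' s - γ * ∫ s', V' s' ∂(P (s, a)) ≤ c (s, a))
    (hV'_opt : ∫ s, W s ∂ν ≤ ∫ s, V' s ∂ν) :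
    ∫ s, |Vstar s - V' s| ∂ν ≤ 4 * ε / (1 - γ) := by
  have iVstar : Integrable Vstar ν := hVstar_meas.integrable_of_forall_abs_le hVstar_bdd
  have iVFE : Integrable VFE ν := hVFE_meas.integrable_of_forall_abs_le hVFE_bdd
  have iW : Integrable W ν := hW_meas.integrable_of_forall_abs_le hW_bdd
  have iV' : Integrable V' ν := hV'_meas.integrable_of_forall_abs_le hV'_bdd
  have iVFE_err : Integrable (fun s => |Vstar s - VFE s|) ν := (iVstar.sub iVFE).abs
  have hV'_le (s : S) : V' s ≤ Vstar s :=
    DiscountedMDP.SatisfiesALP.le_of_isBellmanFixedPoint hV'_ALP hBellman hAct hγ0 hγ1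
      hV'_meas hV'_bdd hVstar_meas hVstar_bdd s
  have hW_le (s : S) : W s ≤ Vstar s :=
    DiscountedMDP.SatisfiesALP.le_of_isBellmanFixedPoint hW_ALP hBellman hAct hγ0 hγ1
      hW_meas hW_bdd hVstar_meas hVstar_bdd s
  calc ∫ s, |Vstar s - V' s| ∂ν
      = ∫ s, Vstar s ∂ν - ∫ s, V' s ∂ν := by
        simp_rw [abs_of_nonneg (sub_nonneg.2 (hV'_le _))]
        exact integral_sub iVstar iV'
    _ ≤ ∫ s, Vstar s ∂ν - ∫ s, W s ∂ν := by linarith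
    _ = ∫ s, |Vstar s - W s| ∂ν := by
        simp_rw [abs_of_nonneg (sub_nonneg.2 (hW_le _))]
        exact (integral_sub iVstar iW).symm
    _ ≤ ∫ s, (|Vstar s - VFE s| + 2 * ε / (1 - γ)) ∂ν :=
        integral_mono (iVstar.sub iW).abs (iVFE_err.add (integrable_const _))
          fun s => (abs_sub_le _ (VFE s) _).trans (add_le_add_right (hW_close s) _)
    _ = ∫ s, |Vstar s - VFE s| ∂ν + 2 * ε / (1 - γ) := by
        rw [integral_add iVFE_err (integrable_const _), integral_const,
          probReal_univ, one_smul]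
    _ ≤ 2 * ε / (1 - γ) + 2 * ε / (1 - γ) := by gcongr
    _ = 4 * ε / (1 - γ) := by ring

/-- Suppose `V^{FE}` is bounded measurable, satisfies the ALP constraints
and `∫|V* − V^{FE}| dν ≤ 2ε/(1−γ)`; `W` is bounded measurable, satisfies the ALP
constraints and `sup|V^{FE} − W| ≤ 2ε/(1−γ)`; and `V'` is bounded measurable, satisfies
the ALP constraints, and has `∫ V' dν ≥ ∫ W dν`. Then `∫|V* − V'| dν ≤ 4ε/(1−γ)`. -/
theorem stmt_17
    {S A : Type*} [MeasurableSpace S] [MeasurableSpace A]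
    (Act : S → Set A) (hAct : ∀ s, (Act s).Nonempty)
    (c : S × A → ℝ) (hc_meas : Measurable c) (hc_bdd : ∃ M, ∀ p, |c p| ≤ M)
    (γ : ℝ) (hγ0 : 0 ≤ γ) (hγ1 : γ < 1)
    (P : Kernel (S × A) S) [IsMarkovKernel P]
    (Vstar : S → ℝ) (hVstar_meas : Measurable Vstar)
    (hVstar_bdd : ∃ M, ∀ s, |Vstar s| ≤ M)
    (hBellman : ∀ s : S,
      Vstar s = ⨅ a : Act s, (c (s, (a : A)) + γ * ∫ s', Vstar s' ∂(P (s, (a : A)))))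
    (ν : Measure S) [IsProbabilityMeasure ν]
    (ε : ℝ) (hε : 0 < ε)
    (VFE : S → ℝ) (hVFE_meas : Measurable VFE) (hVFE_bdd : ∃ M, ∀ s, |VFE s| ≤ M)
    (hVFE_ALP : ∀ s : S, ∀ a ∈ Act s, VFE s - γ * ∫ s', VFE s' ∂(P (s, a)) ≤ c (s, a))
    (hVFE_close : ∫ s, |Vstar s - VFE s| ∂ν ≤ 2 * ε / (1 - γ))
    (W : S → ℝ) (hW_meas : Measurable W) (hW_bdd : ∃ M, ∀ s, |W s| ≤ M)
    (hW_ALP : ∀ s : S, ∀ a ∈ Act s, W s - γ * ∫ s', W s' ∂(P (s, a)) ≤ c (s, a))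
    (hW_close : ∀ s : S, |VFE s - W s| ≤ 2 * ε / (1 - γ))
    (V' : S → ℝ) (hV'_meas : Measurable V') (hV'_bdd : ∃ M, ∀ s, |V' s| ≤ M)
    (hV'_ALP : ∀ s : S, ∀ a ∈ Act s, V' s - γ * ∫ s', V' s' ∂(P (s, a)) ≤ c (s, a))
    (hV'_opt : ∫ s, W s ∂ν ≤ ∫ s, V' s ∂ν) :
    ∫ s, |Vstar s - V' s| ∂ν ≤ 4 * ε / (1 - γ) :=
  stmt_17_general Act hAct c γ hγ0 hγ1 P Vstar hVstar_meas hVstar_bdd hBellman ν ε VFE hVFE_meas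
    hVFE_bdd hVFE_close W hW_meas hW_bdd hW_ALP hW_close V' hV'_meas hV'_bdd hV'_ALP hV'_opt
end

section
/- Let ν be a probability measure on S, ε > 0, and let V_N be bounded measurable with V_N(s) ≤ V*(s) − κ for all s ∈ S, for some κ > 0. Suppose W is bounded measurable, satisfies the ALP (Bellman) constraints, and sup_{s∈S} |V*(s) − W(s)| ≤ min{ε, κ}. Then: (i) W(s) ≥ V_N(s) for every s ∈ S (so W satisfies the self-guiding constraint W ≥ V_N); and (ii) every bounded measurable V' that satisfies the ALP constraints, satisfies V'(s) ≥ V_N(s) for all s ∈ S, and has ∫_S V' dν ≥ ∫_S W dν, satisfies ∫_S |V* − V'| dν ≤ min{ε, κ}. -/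
open MeasureTheory ProbabilityTheory

lemma int_of_bdd {S : Type*} [MeasurableSpace S] (μ : Measure S) [IsFiniteMeasure μ]
    {f : S → ℝ} (hf : Measurable f) {M : ℝ} (hM : ∀ s, |f s| ≤ M) : Integrable f μ :=
  ⟨hf.aestronglyMeasurable, HasFiniteIntegral.of_bounded (C := M) (ae_of_all _ hM)⟩

lemma alp_le {S A : Type*} [MeasurableSpace S] [MeasurableSpace A] [Nonempty S]
    (Act : S → Set A) (hAct : ∀ s, (Act s).Nonempty)
    (c : S × A → ℝ)
    (γ : ℝ) (hγ0 : 0 ≤ γ) (hγ1 : γ < 1)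
    (P : Kernel (S × A) S) [IsMarkovKernel P]
    (Vstar : S → ℝ) (hVstar_meas : Measurable Vstar)
    (hVstar_bdd : ∃ M, ∀ s, |Vstar s| ≤ M)
    (hBellman : ∀ s : S,
      Vstar s = ⨅ a : Act s, (c (s, (a : A)) + γ * ∫ s', Vstar s' ∂(P (s, (a : A)))))
    (V' : S → ℝ) (hV'_meas : Measurable V') (hV'_bdd : ∃ M, ∀ s, |V' s| ≤ M)
    (hALP : ∀ s : S, ∀ a ∈ Act s, V' s - γ * ∫ s', V' s' ∂(P (s, a)) ≤ c (s, a)) :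
    ∀ s, V' s ≤ Vstar s := by
  obtain ⟨M1, hM1⟩ := hVstar_bdd
  obtain ⟨M2, hM2⟩ := hV'_bdd
  set d := sSup (Set.range fun s => V' s - Vstar s) with hd
  have hbdd : BddAbove (Set.range fun s => V' s - Vstar s) := by
    refine ⟨M2 + M1, ?_⟩
    rintro _ ⟨s, rfl⟩
    have := abs_le.mp (hM1 s); have := abs_le.mp (hM2 s)
    dsimp; linarith
  have hne : (Set.range fun s => V' s - Vstar s).Nonempty := Set.range_nonempty _
  have hle : ∀ s, V' s - Vstar s ≤ d := fun s => le_csSup hbdd ⟨s, rfl⟩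
  have key : ∀ δ : ℝ, 0 < δ → d ≤ γ * d + 2 * δ := by
    intro δ hδ
    obtain ⟨_, ⟨s, rfl⟩, hs⟩ := exists_lt_of_lt_csSup hne (by linarith : d - δ < d)
    have hNE : Nonempty (Act s) := (hAct s).to_subtype
    have hinf : (⨅ a : Act s, (c (s, (a : A)) + γ * ∫ s', Vstar s' ∂(P (s, (a : A))))) < Vstar s + δ := by
      rw [← hBellman s]; linarith
    obtain ⟨a, ha⟩ := exists_lt_of_ciInf_lt hinf
    have hs' : d - δ < V' s - Vstar s := hs
    have halp := hALP s a a.2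
    have hint : ∫ s', (V' s' - Vstar s') ∂(P (s, (a : A))) ≤ d := by
      have hI1 : Integrable V' (P (s, (a : A))) := int_of_bdd _ hV'_meas hM2
      have hI2 : Integrable Vstar (P (s, (a : A))) := int_of_bdd _ hVstar_meas hM1
      calc ∫ s', (V' s' - Vstar s') ∂(P (s, (a : A)))
          ≤ ∫ _, d ∂(P (s, (a : A))) := by
            exact integral_mono (hI1.sub hI2) (integrable_const d) hle
        _ = d := by simp
    have hsub : ∫ s', (V' s' - Vstar s') ∂(P (s, (a : A)))
        = (∫ s', V' s' ∂(P (s, (a : A)))) - ∫ s', Vstar s' ∂(P (s, (a : A))) :=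
      integral_sub (int_of_bdd _ hV'_meas hM2) (int_of_bdd _ hVstar_meas hM1)
    -- V' s - Vstar s ≤ γ d + 2δ... combine
    have h1 : V' s ≤ c (s, (a : A)) + γ * ∫ s', V' s' ∂(P (s, (a : A))) := by linarith
    have h2 : c (s, (a : A)) + γ * ∫ s', Vstar s' ∂(P (s, (a : A))) < Vstar s + δ := ha
    have h3 : γ * ((∫ s', V' s' ∂(P (s, (a : A)))) - ∫ s', Vstar s' ∂(P (s, (a : A)))) ≤ γ * d := by
      rw [← hsub]; exact mul_le_mul_of_nonneg_left hint hγ0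
    linarith
  have hd0 : d ≤ 0 := by
    have : (1 - γ) * d ≤ 0 := by
      have h := le_of_forall_pos_le_add (a := (1-γ)*d) (b := 0) ?_
      · exact h
      · intro δ hδ
        have := key (δ/2) (by linarith)
        nlinarith
    nlinarith
  intro s
  have := hle s
  linarith

/-- Let `V_N ≤ V* − κ` pointwise for some `κ > 0`, and let `W` be bounded
measurable, satisfy the ALP constraints, and `sup|V* − W| ≤ min{ε, κ}`. Then `W ≥ V_N`
pointwise (so `W` satisfies the self-guiding constraints), and every bounded measurable
`V'` satisfying the ALP constraints, `V' ≥ V_N` pointwise, and `∫ V' dν ≥ ∫ W dν`,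
satisfies `∫ |V* − V'| dν ≤ min{ε, κ}`. -/
theorem stmt_18
    {S A : Type*} [MeasurableSpace S] [MeasurableSpace A]
    (Act : S → Set A) (hAct : ∀ s, (Act s).Nonempty)
    (c : S × A → ℝ) (hc_meas : Measurable c) (hc_bdd : ∃ M, ∀ p, |c p| ≤ M)
    (γ : ℝ) (hγ0 : 0 ≤ γ) (hγ1 : γ < 1)
    (P : Kernel (S × A) S) [IsMarkovKernel P]
    (Vstar : S → ℝ) (hVstar_meas : Measurable Vstar)
    (hVstar_bdd : ∃ M, ∀ s, |Vstar s| ≤ M)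
    (hBellman : ∀ s : S,
      Vstar s = ⨅ a : Act s, (c (s, (a : A)) + γ * ∫ s', Vstar s' ∂(P (s, (a : A)))))
    (ν : Measure S) [IsProbabilityMeasure ν]
    (ε : ℝ) (hε : 0 < ε) (κ : ℝ) (hκ : 0 < κ)
    (VN : S → ℝ) (hVN_meas : Measurable VN) (hVN_bdd : ∃ M, ∀ s, |VN s| ≤ M)
    (hVN_below : ∀ s : S, VN s ≤ Vstar s - κ)
    (W : S → ℝ) (hW_meas : Measurable W) (hW_bdd : ∃ M, ∀ s, |W s| ≤ M)
    (hW_ALP : ∀ s : S, ∀ a ∈ Act s, W s - γ * ∫ s', W s' ∂(P (s, a)) ≤ c (s, a))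
    (hW_close : ∀ s : S, |Vstar s - W s| ≤ min ε κ) :
    (∀ s : S, VN s ≤ W s) ∧
      ∀ V' : S → ℝ, Measurable V' → (∃ M, ∀ s, |V' s| ≤ M) →
        (∀ s : S, ∀ a ∈ Act s, V' s - γ * ∫ s', V' s' ∂(P (s, a)) ≤ c (s, a)) →
        (∀ s : S, VN s ≤ V' s) →
        (∫ s, W s ∂ν ≤ ∫ s, V' s ∂ν) →
        ∫ s, |Vstar s - V' s| ∂ν ≤ min ε κ := by
  have hSne : Nonempty S := by
    by_contra h
    have : ν Set.univ = 1 := measure_univ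
    rw [Set.univ_eq_empty_iff.mpr (not_nonempty_iff.mp h), measure_empty] at this
    exact zero_ne_one this
  constructor
  · intro s
    have h1 := (abs_le.mp (hW_close s)).1
    have h2 : Vstar s - W s ≤ κ := le_trans (abs_le.mp (hW_close s)).2 (min_le_right _ _)
    have := hVN_below s
    linarith
  · intro V' hV'_meas hV'_bdd hV'_ALP hV'_ge hV'_int
    obtain ⟨M1, hM1⟩ := hVstar_bdd
    obtain ⟨M2, hM2⟩ := hV'_bdd
    obtain ⟨M3, hM3⟩ := hW_bdd
    have hV'le : ∀ s, V' s ≤ Vstar s :=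
      alp_le Act hAct c γ hγ0 hγ1 P Vstar hVstar_meas ⟨M1, hM1⟩ hBellman V' hV'_meas
        ⟨M2, hM2⟩ hV'_ALP
    have habs : ∀ s, |Vstar s - V' s| = Vstar s - V' s := fun s =>
      abs_of_nonneg (by linarith [hV'le s])
    have hIs : Integrable Vstar ν := int_of_bdd _ hVstar_meas hM1
    have hIV : Integrable V' ν := int_of_bdd _ hV'_meas hM2
    have hIW : Integrable W ν := int_of_bdd _ hW_meas hM3
    calc ∫ s, |Vstar s - V' s| ∂ν = ∫ s, (Vstar s - V' s) ∂ν := by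
          exact integral_congr_ae (ae_of_all _ habs)
      _ = (∫ s, Vstar s ∂ν) - ∫ s, V' s ∂ν := integral_sub hIs hIV
      _ ≤ (∫ s, Vstar s ∂ν) - ∫ s, W s ∂ν := by linarith
      _ = ∫ s, (Vstar s - W s) ∂ν := (integral_sub hIs hIW).symm
      _ ≤ ∫ _, min ε κ ∂ν := by
          refine integral_mono (hIs.sub hIW) (integrable_const _) fun s => ?_
          exact le_trans (le_abs_self _) (hW_close s)
      _ = min ε κ := by simp
end
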